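/- arXiv:1111.3405 — 8 statements merged into one kernel-verified Lean document; each statement's English description precedes it below -/
import Mathlib

section
/- Let x_0 < x_1 < ... < x_n be real numbers and for t > 0 let f_t(x) = t^x. Define \psi(t) = [x_0,...,x_n]f_t. Then \psi'(t) = x_0 \cdot [x_0-1, x_1-1, ..., x_n-1]f_t + [x_1-1, ..., x_n-1]f_t. -/
/-- The divided difference `[x 0, ..., x n] f` at pairwise distinct points,
given by the explicit formula `∑ i, f (x i) / ∏_{j ≠ i} (x i - x j)`. -/
noncomputable def divSum (n : ℕ) (x : Fin (n+1) → ℝ) (f : ℝ → ℝ) : ℝ :=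
  ∑ i : Fin (n+1), f (x i) / ∏ j ∈ Finset.univ.erase i, (x i - x j)

/-!
Differentiating term by term, `ψ' t = [x_0, ..., x_n] (a ↦ a t^(a-1))`. Split
`a = x_0 + (a - x_0)`: the `x_0` part is `x_0 [x_0, ..., x_n] (a ↦ t^(a-1))`, which is the divided
difference of `t^a` at the nodes shifted by `-1`; in the other part the factor `a - x_0` kills the
term of `x_0` and cancels the factor `x_i - x_0` of every other denominator, leaving
`[x_1, ..., x_n] (a ↦ t^(a-1))`.
-/

open Finset

theorem Fin.prod_univ_erase_succ {M : Type*} [CommMonoid M] {m : ℕ} (g : Fin (m + 1) → M)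
    (i : Fin m) : ∏ j ∈ univ.erase i.succ, g j = g 0 * ∏ j ∈ univ.erase i, g j.succ := by
  simp only [← filter_ne', prod_filter, Fin.prod_univ_succ, ne_eq, Fin.succ_inj,
    (Fin.succ_ne_zero i).symm, not_false_eq_true, if_true]

theorem divSum_sub_const (n : ℕ) (x : Fin (n + 1) → ℝ) (c : ℝ) (f : ℝ → ℝ) :
    divSum n (fun i => x i - c) f = divSum n x (fun a => f (a - c)) := by
  simp only [divSum, sub_sub_sub_cancel_right]

theorem divSum_add (n : ℕ) (x : Fin (n + 1) → ℝ) (f g : ℝ → ℝ) :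
    divSum n x (fun a => f a + g a) = divSum n x f + divSum n x g := by
  simp only [divSum, add_div, sum_add_distrib]

theorem divSum_const_mul (n : ℕ) (x : Fin (n + 1) → ℝ) (c : ℝ) (f : ℝ → ℝ) :
    divSum n x (fun a => c * f a) = c * divSum n x f := by
  simp only [divSum, mul_div_assoc, mul_sum]

theorem divSum_sub_head_mul (m : ℕ) (x : Fin (m + 2) → ℝ) (hx : Function.Injective x)
    (g : ℝ → ℝ) :
    divSum (m + 1) x (fun a => (a - x 0) * g a) = divSum m (fun i => x i.succ) g := by
  rw [divSum, Fin.sum_univ_succ, sub_self, zero_mul, zero_div, zero_add]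
  refine sum_congr rfl fun i _ => ?_
  have hhead : x i.succ - x 0 ≠ 0 := sub_ne_zero.2 (hx.ne (Fin.succ_ne_zero i))
  rw [Fin.prod_univ_erase_succ (fun j => x i.succ - x j), mul_div_mul_left _ _ hhead]

theorem hasDerivAt_divSum_rpow (n : ℕ) (x : Fin (n + 1) → ℝ) {t : ℝ} (ht : t ≠ 0) :
    HasDerivAt (fun s => divSum n x (fun a => s ^ a)) (divSum n x fun a => a * t ^ (a - 1)) t :=
  HasDerivAt.fun_sum fun _ _ => (Real.hasDerivAt_rpow_const (Or.inl ht)).div_const _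

/-- For  and  with ,
. -/
theorem stmt2 (n : ℕ) (hn : 1 ≤ n) (x : Fin (n+1) → ℝ) (hx : StrictMono x)
    (t : ℝ) (ht : 0 < t) :
    HasDerivAt (fun s : ℝ => divSum n x (fun a => s ^ a))
      (x 0 * divSum n (fun i => x i - 1) (fun a => t ^ a)
        + divSum (n-1) (fun i : Fin (n-1+1) =>
            x ⟨i.val + 1, by have := i.isLt; omega⟩ - 1) (fun a => t ^ a)) t := by
  obtain ⟨m, rfl⟩ : ∃ m, n = m + 1 := ⟨n - 1, by omega⟩
  have hsplit : ∀ a : ℝ, a * t ^ (a - 1) = x 0 * t ^ (a - 1) + (a - x 0) * t ^ (a - 1) :=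
    fun a => by ring
  convert hasDerivAt_divSum_rpow (m + 1) x ht.ne' using 1
  simp only [hsplit, divSum_add, divSum_const_mul, divSum_sub_head_mul m x hx.injective,
    divSum_sub_const]
  -- `m + 1 - 1` reduces to `m` and `⟨i.val + 1, _⟩` to `i.succ`
  rfl
end

section
/- Let 0 = r_0 < r_1 < ... < r_n be real numbers and for t \in [0,1] define H_k(t) = (-1)^{n-k} r_{k+1} \cdots r_n [r_k,...,r_n]f_t for k = 0,...,n-1 and H_n(t) = t^{r_n}, where f_t(x) = t^x. Then \sum_{k=0}^{n} H_k(t) = 1 for all t \in (0,1]. -/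
/-- The Gelfond-Bernstein basis function `H^n_{k,Λ}` associated with the sequence
`Λ = (r 0, ..., r n)`: `H^n_k (t) = (-1)^(n-k) r_{k+1} ⋯ r_n [r_k, ..., r_n] f_t`
for `k ≤ n-1` and `H^n_n (t) = t ^ (r n)`, where `f_t x = t ^ x` (real power). -/
noncomputable def GB (n : ℕ) (r : Fin (n+1) → ℝ) (k : Fin (n+1)) (t : ℝ) : ℝ :=
  if k.val = n then t ^ (r k)
  else (-1 : ℝ) ^ (n - k.val) * (∏ j ∈ Finset.Ioi k, r j) *
    divSum (n - k.val)
      (fun i => r ⟨k.val + i.val, by have h1 := i.isLt; have h2 := k.isLt; omega⟩)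
      (fun x => t ^ x)

/-!
The sum `∑ k, H_k t` is Newton's form, with the nodes taken in the order `r_n, …, r_0`, of the
polynomial interpolating `x ↦ t ^ x` at the nodes, evaluated at `0`: the coefficient
`(-1)^(n-k) r_{k+1} ⋯ r_n` is the nodal polynomial `∏_{j > k} (X - r_j)` at `0`. Since `r_0 = 0`
is itself a node, the interpolant takes the value `t ^ 0 = 1` there.
-/

open Finset Polynomial Lagrange

section DivDiff

variable {F ι : Type*} [Field F] [DecidableEq ι]

def divDiff (s : Finset ι) (x v : ι → F) : F :=
  ∑ i ∈ s, v i / ∏ j ∈ s.erase i, (x i - x j)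

theorem divDiff_map {κ : Type*} [DecidableEq κ] (s : Finset ι) (e : ι ↪ κ) (x v : κ → F) :
    divDiff (s.map e) x v = divDiff s (x ∘ e) (v ∘ e) := by
  simp only [divDiff, sum_map, ← map_erase, prod_map, Function.comp_apply]

theorem divSum_eq_divDiff (n : ℕ) (x : Fin (n+1) → ℝ) (f : ℝ → ℝ) :
    divSum n x f = divDiff univ x (f ∘ x) :=
  rfl

theorem eval_interpolate_eq_sum (s : Finset ι) (x v : ι → F) (z : F) :
    (interpolate s x v).eval z = ∑ i ∈ s, v i * ∏ j ∈ s.erase i, (z - x j) / (x i - x j) := by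
  simp only [interpolate_apply, eval_finsetSum, eval_mul, eval_C, Lagrange.basis, eval_prod,
    basisDivisor, eval_sub, eval_X, div_eq_inv_mul]

theorem eval_interpolate_insert {s : Finset ι} {a : ι} {x : ι → F} (ha : a ∉ s)
    (hx : Set.InjOn x (insert a s : Finset ι)) (v : ι → F) (z : F) :
    (interpolate (insert a s) x v).eval z =
      (interpolate s x v).eval z + (nodal s x).eval z * divDiff (insert a s) x v := by
  have erase_insert_eq {i : ι} (hi : i ∈ s) : (insert a s).erase i = insert a (s.erase i) :=
    erase_insert_of_ne (ne_of_mem_of_not_mem hi ha).symm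
  have hxi {i : ι} (hi : i ∈ s) : x i - x a ≠ 0 :=
    sub_ne_zero.2 fun h => ne_of_mem_of_not_mem hi ha (hx (by simp [hi]) (by simp) h)
  simp only [eval_interpolate_eq_sum, divDiff, eval_nodal, sum_insert ha, erase_insert ha,
    mul_add, mul_sum]
  rw [add_left_comm, ← sum_add_distrib, prod_div_distrib, mul_div_assoc', ← mul_div_assoc,
    mul_comm (∏ i ∈ s, (z - x i))]
  congr 1
  refine sum_congr rfl fun i hi => ?_
  rw [erase_insert_eq hi, prod_insert (fun h => ha (mem_of_mem_erase h)),
    prod_insert (fun h => ha (mem_of_mem_erase h)), ← mul_prod_erase s (fun j => z - x j) hi,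
    prod_div_distrib]
  field_simp [hxi hi]
  ring

end DivDiff

theorem eval_interpolate_eq_sum_nodal_mul_divDiff {F ι : Type*} [Field F] [LinearOrder ι]
    {s : Finset ι} {x : ι → F} (hx : Set.InjOn x s) (v : ι → F) (z : F) :
    (interpolate s x v).eval z =
      ∑ i ∈ s, (nodal {j ∈ s | i < j} x).eval z * divDiff {j ∈ s | i ≤ j} x v := by
  induction s using Finset.induction_on_min with
  | empty => simp
  | insert a s ha_lt ih =>
    have ha : a ∉ s := fun h => lt_irrefl a (ha_lt a h)
    have filter_lt (i : ι) (hi : i ∈ s) : {j ∈ insert a s | i < j} = {j ∈ s | i < j} := by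
      rw [filter_insert, if_neg (ha_lt i hi).not_gt]
    have filter_le (i : ι) (hi : i ∈ s) : {j ∈ insert a s | i ≤ j} = {j ∈ s | i ≤ j} := by
      rw [filter_insert, if_neg (ha_lt i hi).not_ge]
    have filter_lt_min : {j ∈ insert a s | a < j} = s := by
      rw [filter_insert, if_neg (lt_irrefl a), filter_true_of_mem ha_lt]
    have filter_le_min : {j ∈ insert a s | a ≤ j} = insert a s := by
      rw [filter_true_of_mem]
      simp only [mem_insert]
      rintro j (rfl | hj)
      exacts [le_rfl, (ha_lt j hj).le]
    rw [eval_interpolate_insert ha hx, ih (hx.mono (by simp)), sum_insert ha, filter_lt_min,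
      filter_le_min, add_comm]
    congr 1
    exact sum_congr rfl fun i hi => by rw [filter_lt i hi, filter_le i hi]

theorem GB_eq_eval_nodal_mul_divDiff (n : ℕ) (r : Fin (n+1) → ℝ) (k : Fin (n+1)) (t : ℝ) :
    GB n r k t = (nodal (Ioi k) r).eval 0 * divDiff (Ici k) r (fun j => t ^ r j) := by
  rw [GB]
  split_ifs with hk
  · obtain rfl : k = ⊤ := Fin.ext hk
    simp [Ici_top, divDiff]
  let e : Fin (n - k + 1) ↪ Fin (n + 1) :=
    ⟨fun i => ⟨k + i, by omega⟩, fun i j h => Fin.ext (by simpa using h)⟩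
  have hIci : Ici k = univ.map e := by
    ext j
    simp only [mem_Ici, mem_map, mem_univ, true_and]
    constructor
    · intro h
      exact ⟨⟨j - k, by omega⟩, Fin.ext (show (k : ℕ) + (j - k) = j by omega)⟩
    · rintro ⟨i, rfl⟩
      exact Fin.le_def.2 (Nat.le_add_right _ _)
  rw [eval_nodal, hIci, divDiff_map, divSum_eq_divDiff]
  simp only [zero_sub, prod_neg, Fin.card_Ioi]
  rfl

theorem stmt4_general (n : ℕ) (r : Fin (n+1) → ℝ) (hr : StrictMono r) (h0 : r 0 = 0)
    (t : ℝ) :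
    ∑ k : Fin (n+1), GB n r k t = 1 := by
  have hr_inj : Set.InjOn r (univ : Finset (Fin (n+1))) := hr.injective.injOn
  calc ∑ k, GB n r k t
      = ∑ k, (nodal {j | k < j} r).eval 0 * divDiff {j | k ≤ j} r (fun j => t ^ r j) := by
        simp only [GB_eq_eval_nodal_mul_divDiff, filter_lt_eq_Ioi, filter_le_eq_Ici]
    _ = (interpolate univ r fun j => t ^ r j).eval (r 0) := by
        rw [h0, eval_interpolate_eq_sum_nodal_mul_divDiff hr_inj]
    _ = 1 := by
        rw [eval_interpolate_at_node _ hr_inj (mem_univ 0), h0, Real.rpow_zero]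

/-- The Gelfond-Bernstein basis functions sum to  on . -/
theorem stmt4 (n : ℕ) (r : Fin (n+1) → ℝ) (hr : StrictMono r) (h0 : r 0 = 0)
    (t : ℝ) (ht : t ∈ Set.Ioc (0:ℝ) 1) :
    ∑ k : Fin (n+1), GB n r k t = 1 :=
  stmt4_general n r hr h0 t
end

section
/- Let 0 = r_0 < r_1 < ... < r_n be strictly increasing integers. For k = 0,...,n-1 the Gelfond-Bernstein basis function H_k(t) = (-1)^{n-k} r_{k+1}\cdots r_n [r_k,...,r_n]f_t has a zero of order exactly n-k at t = 1, i.e., H_k^{(j)}(1) = 0 for 0 \le j \le n-k-1 and H_k^{(n-k)}(1) \ne 0. -/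
/-!
With integer exponents, `t ↦ [r_k, …, r_n] f_t` is the polynomial
`∑ᵢ t ^ rᵢ / ∏_{j ≠ i} (rᵢ - rⱼ)`. Its `j`-th derivative at `t = 1` is the divided difference
of the falling factorial `x (x - 1) ⋯ (x - j + 1)` at the same nodes, i.e. its coefficient of
`x ^ (n - k)`, which vanishes for `j < n - k` and equals `1` for `j = n - k`. The prefactor
`± r_{k+1} ⋯ r_n` is nonzero because `0 = r_0 < r_{k+1}`.
-/

open Polynomial Finset

theorem divSum_eval_eq_coeff {N : ℕ} {x : Fin (N + 1) → ℝ} (hx : Function.Injective x)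
    {P : ℝ[X]} (hP : P.degree < ↑(N + 1)) :
    divSum N x (fun y => P.eval y) = P.coeff N := by
  simpa [divSum] using (Lagrange.coeff_eq_sum (s := univ) hx.injOn (by simpa using hP)).symm

theorem iteratedDeriv_divSum_rpow_natCast_one {N : ℕ} (M : Fin (N + 1) → ℕ) (j : ℕ) :
    iteratedDeriv j (fun t : ℝ => divSum N (fun i => (M i : ℝ)) (fun y => t ^ y)) 1 =
      divSum N (fun i => (M i : ℝ)) (fun y => (descPochhammer ℝ j).eval y) := by
  simp only [divSum, Real.rpow_natCast, div_eq_inv_mul]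
  rw [iteratedDeriv_fun_sum fun i _ => by fun_prop]
  simp [descPochhammer_eval_eq_descFactorial]

theorem iteratedDeriv_divSum_rpow_natCast_one_eq_coeff {N : ℕ} {M : Fin (N + 1) → ℕ}
    (hM : Function.Injective M) {j : ℕ} (hj : j ≤ N) :
    iteratedDeriv j (fun t : ℝ => divSum N (fun i => (M i : ℝ)) (fun y => t ^ y)) 1 =
      (descPochhammer ℝ j).coeff N := by
  rw [iteratedDeriv_divSum_rpow_natCast_one,
    divSum_eval_eq_coeff (x := fun i => (M i : ℝ)) (Nat.cast_injective.comp hM)]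
  refine degree_le_natDegree.trans_lt ?_
  rw [descPochhammer_natDegree]
  exact_mod_cast Nat.lt_succ_of_le hj

theorem GB_of_lt {n : ℕ} (r : Fin (n + 1) → ℝ) {k : Fin (n + 1)} (hk : k.val < n) :
    GB n r k = fun t => ((-1 : ℝ) ^ (n - k.val) * ∏ j ∈ Ioi k, r j) *
      divSum (n - k.val) (fun i => r ⟨k.val + i.val, by omega⟩) (fun x => t ^ x) := by
  funext t
  simp [GB, hk.ne]

/-- For strictly increasing integer exponents with  and , the
Gelfond-Bernstein basis function  has a zero of order exactly  at . -/
theorem stmt5 (n : ℕ) (m : Fin (n+1) → ℕ) (hm : StrictMono m) (h0 : m 0 = 0)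
    (k : Fin (n+1)) (hk : k.val < n) :
    (∀ j : ℕ, j ≤ n - k.val - 1 → iteratedDeriv j (GB n (fun i => (m i : ℝ)) k) 1 = 0) ∧
    iteratedDeriv (n - k.val) (GB n (fun i => (m i : ℝ)) k) 1 ≠ 0 := by
  have hinj : Function.Injective fun i : Fin (n - k.val + 1) => m ⟨k.val + i.val, by omega⟩ :=
    fun a b hab => Fin.ext (by simpa using hm.injective hab)
  have hderiv : ∀ j ≤ n - k.val, iteratedDeriv j (GB n (fun i => (m i : ℝ)) k) 1 =
      ((-1 : ℝ) ^ (n - k.val) * ∏ j ∈ Ioi k, (m j : ℝ)) *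
        (descPochhammer ℝ j).coeff (n - k.val) := fun j hj => by
    rw [GB_of_lt _ hk, iteratedDeriv_const_mul_field,
      iteratedDeriv_divSum_rpow_natCast_one_eq_coeff hinj hj]
  have hprod : ∏ j ∈ Ioi k, (m j : ℝ) ≠ 0 := prod_ne_zero_iff.mpr fun j hj => by
    have : m 0 < m j := hm ((Fin.zero_le k).trans_lt (mem_Ioi.mp hj))
    rw [h0] at this
    positivity
  refine ⟨fun j hj => ?_, ?_⟩
  · have hlow : (descPochhammer ℝ j).coeff (n - k.val) = 0 :=
      coeff_eq_zero_of_natDegree_lt (by rw [descPochhammer_natDegree]; omega)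
    rw [hderiv j (by omega), hlow, mul_zero]
  · have hlead := (monic_descPochhammer ℝ (n - k.val)).coeff_natDegree
    rw [descPochhammer_natDegree] at hlead
    rw [hderiv _ le_rfl, hlead, mul_one]
    exact mul_ne_zero (pow_ne_zero _ (by norm_num)) hprod
end

section
/- Let 0 = r_0 < r_1 < ... < r_n be strictly increasing integers and H_k the associated Gelfond-Bernstein basis functions. For each k, H_k has a zero of order exactly r_k at t = 0, i.e., H_k^{(j)}(0) = 0 for 0 \le j < r_k and H_k^{(r_k)}(0) \ne 0. -/
/- Auxiliary lemmas -/

lemma iterConstMul (j : ℕ) (c : ℝ) (f : ℝ → ℝ) (hf : ContDiff ℝ (⊤ : ℕ∞) f) :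
    iteratedDeriv j (fun x => c * f x) = fun x => c * iteratedDeriv j f x := by
  funext x
  simp only [← iteratedDerivWithin_univ]
  exact iteratedDerivWithin_const_mul (Set.mem_univ x) uniqueDiffOn_univ c
    ((hf.of_le (mod_cast le_top)).contDiffWithinAt)

lemma iterAdd (j : ℕ) (f g : ℝ → ℝ) (hf : ContDiff ℝ (⊤ : ℕ∞) f) (hg : ContDiff ℝ (⊤ : ℕ∞) g) :
    iteratedDeriv j (fun x => f x + g x) =
      fun x => iteratedDeriv j f x + iteratedDeriv j g x := by
  funext x
  simp only [← iteratedDerivWithin_univ]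
  exact iteratedDerivWithin_add (Set.mem_univ x) uniqueDiffOn_univ
    ((hf.of_le (mod_cast le_top)).contDiffWithinAt) ((hg.of_le (mod_cast le_top)).contDiffWithinAt)

lemma iterZero (j : ℕ) : iteratedDeriv j (fun _ : ℝ => (0:ℝ)) = fun _ => 0 := by
  induction j with
  | zero => rfl
  | succ j ih =>
    rw [iteratedDeriv_succ']
    have hd : deriv (fun _ : ℝ => (0:ℝ)) = fun _ : ℝ => (0:ℝ) := by
      funext x; simp
    rw [hd, ih]

lemma iterPow (j p : ℕ) : iteratedDeriv j (fun x : ℝ => x ^ p) =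
    fun x => (p.descFactorial j : ℝ) * x ^ (p - j) := by
  induction j generalizing p with
  | zero => funext x; simp
  | succ j ih =>
    rw [iteratedDeriv_succ']
    have hd : deriv (fun x : ℝ => x ^ p) = fun x : ℝ => (p : ℝ) * x ^ (p - 1) := by
      funext x; simp
    have hc : ContDiff ℝ (⊤ : ℕ∞) (fun x : ℝ => x ^ (p - 1)) := by fun_prop
    rw [hd]
    simp only [iterConstMul j (p : ℝ) (fun x : ℝ => x ^ (p - 1)) hc, ih]
    funext x
    have h1 : p.descFactorial (j+1) = p * (p-1).descFactorial j := by
      cases p with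
      | zero => simp
      | succ q => rw [Nat.succ_descFactorial_succ]; simp
    have h2 : p - (j+1) = p - 1 - j := by omega
    rw [h1, h2]
    push_cast
    ring

lemma iterMonomial (j p : ℕ) (c : ℝ) :
    iteratedDeriv j (fun x : ℝ => c * x ^ p) 0 = if j = p then c * (p.factorial : ℝ) else 0 := by
  have hc : ContDiff ℝ (⊤ : ℕ∞) (fun x : ℝ => x ^ p) := by fun_prop
  simp only [iterConstMul j c (fun x : ℝ => x ^ p) hc, iterPow]
  rcases eq_or_ne j p with rfl | h
  · simp [Nat.descFactorial_self]
  · rw [if_neg h]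
    rcases lt_or_gt_of_ne h with hlt | hgt
    · rw [zero_pow (by omega)]; ring
    · rw [Nat.descFactorial_eq_zero_iff_lt.mpr hgt]; simp

lemma iterSum {ι : Type*} (j : ℕ) (s : Finset ι) (F : ι → ℝ → ℝ)
    (hF : ∀ i ∈ s, ContDiff ℝ (⊤ : ℕ∞) (F i)) :
    iteratedDeriv j (fun t => ∑ i ∈ s, F i t) =
      fun t => ∑ i ∈ s, iteratedDeriv j (F i) t := by
  classical
  induction s using Finset.induction with
  | empty =>
    simp only [Finset.sum_empty]
    rw [iterZero]
  | @insert a s hnot ih =>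
    have hFs : ∀ i ∈ s, ContDiff ℝ (⊤ : ℕ∞) (F i) := fun i hi => hF i (Finset.mem_insert_of_mem hi)
    simp only [Finset.sum_insert hnot]
    simp only [iterAdd j (F a) (fun t => ∑ i ∈ s, F i t) (hF a (Finset.mem_insert_self a s))
      (ContDiff.sum fun i hi => hFs i hi), ih hFs]

lemma iterMonoSum {ι : Type*} (s : Finset ι) (c : ι → ℝ) (p : ι → ℕ) (j : ℕ) :
    iteratedDeriv j (fun t : ℝ => ∑ i ∈ s, c i * t ^ p i) 0
      = ∑ i ∈ s, if j = p i then c i * ((p i).factorial : ℝ) else 0 := by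
  have hF : ∀ i ∈ s, ContDiff ℝ (⊤ : ℕ∞) (fun t : ℝ => c i * t ^ p i) := fun i _ => by fun_prop
  simp only [iterSum j s (fun i t => c i * t ^ p i) hF]
  exact Finset.sum_congr rfl fun i _ => iterMonomial _ _ _

/-- For strictly increasing integer exponents with , each Gelfond-Bernstein
basis function  has a zero of order exactly  at . -/
theorem stmt6 (n : ℕ) (m : Fin (n+1) → ℕ) (hm : StrictMono m) (h0 : m 0 = 0)
    (k : Fin (n+1)) :
    (∀ j : ℕ, j < m k → iteratedDeriv j (GB n (fun i => (m i : ℝ)) k) 0 = 0) ∧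
    iteratedDeriv (m k) (GB n (fun i => (m i : ℝ)) k) 0 ≠ 0 := by
  classical
  by_cases hk : k.val = n
  · -- last basis function: a pure monomial
    have hfun : GB n (fun i => (m i : ℝ)) k = fun t => (1:ℝ) * t ^ (m k) := by
      funext t
      simp only [GB, if_pos hk, one_mul]
      exact Real.rpow_natCast t (m k)
    constructor
    · intro j hj
      rw [hfun, iterMonomial]
      rw [if_neg (by omega)]
    · rw [hfun, iterMonomial, if_pos rfl, one_mul]
      exact_mod_cast Nat.factorial_ne_zero (m k)
  · -- k < n : GB is a sum of monomials
    set N := n - k.val with hN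
    set idx : Fin (N+1) → Fin (n+1) := fun i =>
      ⟨k.val + i.val, by have h1 := i.isLt; have h2 := k.isLt; omega⟩ with hidx
    set A : ℝ := (-1 : ℝ) ^ (n - k.val) * (∏ j ∈ Finset.Ioi k, ((m j : ℝ))) with hA
    set d : Fin (N+1) → ℝ := fun i =>
      ∏ j ∈ Finset.univ.erase i, ((m (idx i) : ℝ) - (m (idx j) : ℝ)) with hd
    have hfun : GB n (fun i => (m i : ℝ)) k =
        fun t => ∑ i : Fin (N+1), (A / d i) * t ^ (m (idx i)) := by
      funext t
      simp only [GB, if_neg hk, divSum]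
      rw [Finset.mul_sum]
      refine Finset.sum_congr rfl fun i _ => ?_
      rw [Real.rpow_natCast]
      rw [div_mul_eq_mul_div, mul_div_assoc]
    -- strict monotonicity of exponents along idx
    have hidxlt : ∀ i : Fin (N+1), i ≠ 0 → m k < m (idx i) := by
      intro i hi
      have hival : 0 < i.val := by
        rcases Nat.eq_zero_or_pos i.val with h | h
        · exact absurd (Fin.ext (by simpa using h)) hi
        · exact h
      apply hm
      rw [Fin.lt_def]
      show (k : ℕ) < k.val + i.val
      omega
    have hidx0 : idx 0 = k := by
      apply Fin.ext; simp [hidx]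
    constructor
    · intro j hj
      rw [hfun, iterMonoSum]
      refine Finset.sum_eq_zero fun i _ => ?_
      rw [if_neg]
      intro hcontra
      rcases eq_or_ne i 0 with rfl | hi
      · rw [hidx0] at hcontra; omega
      · have := hidxlt i hi; omega
    · rw [hfun, iterMonoSum]
      rw [Finset.sum_eq_single (0 : Fin (N+1))]
      · rw [hidx0, if_pos rfl]
        apply mul_ne_zero
        · apply div_ne_zero
          · -- A ≠ 0
            apply mul_ne_zero
            · exact pow_ne_zero _ (by norm_num)
            · refine Finset.prod_ne_zero_iff.mpr fun j hj => ?_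
              have hjk : k < j := Finset.mem_Ioi.mp hj
              have hj0 : (0 : Fin (n+1)) < j := lt_of_le_of_lt (Fin.zero_le k) hjk
              have : 0 < m j := by
                calc 0 = m 0 := h0.symm
                _ < m j := hm hj0
              exact_mod_cast this.ne'
          · -- d 0 ≠ 0
            refine Finset.prod_ne_zero_iff.mpr fun j hj => ?_
            have hj0 : j ≠ 0 := (Finset.mem_erase.mp hj).1
            have := hidxlt j hj0
            rw [hidx0]
            have : (m k : ℝ) < (m (idx j) : ℝ) := by exact_mod_cast this
            linarith
        · exact_mod_cast Nat.factorial_ne_zero (m k)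
      · intro i _ hi
        rw [if_neg]
        intro hcontra
        have := hidxlt i hi; omega
      · intro h; exact absurd (Finset.mem_univ _) h
end

section
/- Let 0 = r_0 < r_1 < ... < r_n be strictly increasing integers. The Gelfond-Bernstein basis H_0,...,H_n is the unique basis of span(1, t^{r_1},...,t^{r_n}) satisfying \sum_k H_k = 1 on [0,1] such that for each k, H_k vanishes to order r_k at 0 and to order n-k at 1. -/
open Polynomial Finset

namespace Polynomial

variable {R : Type*} [CommRing R]

theorem coeff_X_mul_derivative (p : R[X]) (N : ℕ) :
    (X * derivative p).coeff N = N * p.coeff N := by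
  cases N with
  | zero => simp
  | succ N => rw [coeff_X_mul, coeff_derivative]; push_cast; ring

theorem X_mul_derivative_C_mul_X_pow (a : R) (e : ℕ) :
    X * derivative (C a * X ^ e) = C (a * e) * X ^ e := by
  ext N
  rw [coeff_X_mul_derivative, coeff_C_mul_X_pow, coeff_C_mul_X_pow]
  split_ifs with h <;> simp [h, mul_comm]

theorem iterate_derivative_eval_zero (p : R[X]) (j : ℕ) :
    (derivative^[j] p).eval 0 = (j.factorial : R) * p.coeff j := by
  rw [← coeff_zero_eq_eval_zero, coeff_iterate_derivative, zero_add, Nat.descFactorial_self,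
    nsmul_eq_mul]

theorem support_sum_C_mul_X_pow_subset {ι : Type*} [DecidableEq ι] (s : Finset ι) (a : ι → R)
    (e : ι → ℕ) :
    (∑ i ∈ s, C (a i) * X ^ e i).support ⊆ s.image e := by
  intro N hN
  rw [mem_support_iff, finsetSum_coeff] at hN
  obtain ⟨i, hi, hne⟩ := exists_ne_zero_of_sum_ne_zero hN
  rw [coeff_C_mul_X_pow] at hne
  exact mem_image.mpr ⟨i, hi, by by_contra h; exact hne (if_neg (Ne.symm h))⟩

section Exponents

variable {ι : Type*} [LinearOrder ι] [LocallyFiniteOrderTop ι] {m : ι → ℕ}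

theorem coeff_eq_zero_of_support_subset_image_Ici (hm : Monotone m) {p : R[X]} {k : ι}
    (hp : p.support ⊆ (Ici k).image m) {N : ℕ} (hN : N < m k) : p.coeff N = 0 := by
  by_contra h
  obtain ⟨i, hi, rfl⟩ := mem_image.mp (hp (mem_support_iff.mpr h))
  exact hN.not_ge (hm (mem_Ici.mp hi))

theorem support_subset_image_Ici [Fintype ι] (hm : StrictMono m) {p : R[X]} {k : ι}
    (hp : p.support ⊆ univ.image m) (h : ∀ N < m k, p.coeff N = 0) :
    p.support ⊆ (Ici k).image m := by
  intro N hN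
  obtain ⟨i, -, rfl⟩ := mem_image.mp (hp hN)
  refine mem_image.mpr ⟨i, mem_Ici.mpr (not_lt.mp fun hik => ?_), rfl⟩
  exact mem_support_iff.mp hN (h _ (hm hik))

end Exponents

variable [IsDomain R] [CharZero R]

theorem pow_X_sub_C_dvd_of_iterate_derivative_eval_eq_zero {p : R[X]} {a : R} {M : ℕ}
    (h : ∀ j < M, (derivative^[j] p).eval a = 0) : (X - C a) ^ M ∣ p := by
  rcases eq_or_ne p 0 with rfl | hp
  · exact dvd_zero _
  rw [← le_rootMultiplicity_iff hp]
  rcases M with _ | M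
  · exact Nat.zero_le _
  exact lt_rootMultiplicity_of_isRoot_iterate_derivative hp fun j hj => h j (by omega)

theorem eq_zero_of_pow_X_sub_C_dvd_of_card_support_le {a : R} (ha : a ≠ 0) {c : ℕ} {p : R[X]}
    (hdvd : (X - C a) ^ c ∣ p) (hcard : #p.support ≤ c) : p = 0 := by
  induction c generalizing p with
  | zero => simpa using hcard
  | succ c ih =>
    rcases p.support.eq_empty_or_nonempty with hp | ⟨e, he⟩
    · exact support_eq_empty.mp hp
    have hq : X * derivative p - C (e : R) * p = 0 := by
      refine ih ?_ ?_
      · have hd : (X - C a) ^ c ∣ derivative p := by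
          simpa using pow_sub_one_dvd_derivative_of_pow_dvd hdvd
        exact dvd_sub (dvd_mul_of_dvd_right hd _)
          (dvd_mul_of_dvd_right ((pow_dvd_pow _ c.le_succ).trans hdvd) _)
      · have hsub : (X * derivative p - C (e : R) * p).support ⊆ p.support.erase e := by
          intro N hN
          rw [mem_support_iff, coeff_sub, coeff_X_mul_derivative, coeff_C_mul, ← sub_mul] at hN
          refine mem_erase.mpr ⟨?_, mem_support_iff.mpr (right_ne_zero_of_mul hN)⟩
          rintro rfl
          simp at hN
        grw [hsub, card_erase_of_mem he]
        omega
    have hmono : p = C (p.coeff e) * X ^ e := by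
      ext N
      have := congrArg (coeff · N) hq
      simp only [coeff_sub, coeff_X_mul_derivative, coeff_C_mul, coeff_zero, ← sub_mul] at this
      rw [coeff_C_mul_X_pow]
      split_ifs with h
      · rw [h]
      · exact (mul_eq_zero.mp this).resolve_left (sub_ne_zero.mpr (Nat.cast_injective.ne h))
    have hroot : p.eval a = 0 :=
      dvd_iff_isRoot.mp ((dvd_pow_self _ c.succ_ne_zero).trans hdvd)
    rw [hmono, eval_C_mul, eval_X_pow] at hroot
    exact absurd ((mul_eq_zero.mp hroot).resolve_right (pow_ne_zero _ ha))
      (mem_support_iff.mp he)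

theorem eq_zero_of_sum_eq_zero_of_support_subset_of_dvd {n : ℕ} {m : Fin (n + 1) → ℕ}
    (hm : StrictMono m) {a : R} (ha : a ≠ 0) (p : Fin (n + 1) → R[X])
    (hsupp : ∀ k, (p k).support ⊆ (Ici k).image m)
    (hdvd : ∀ k, (X - C a) ^ (n - k.val) ∣ p k) (hsum : ∑ k, p k = 0) (k : Fin (n + 1)) :
    p k = 0 := by
  induction k using WellFoundedLT.induction with
  | ind k ih =>
    have hcoeff : (p k).coeff (m k) = 0 := by
      have := congrArg (coeff · (m k)) hsum
      simp only [finsetSum_coeff, coeff_zero] at this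
      rwa [sum_eq_single k (fun l _ hlk => ?_) (by simp)] at this
      rcases hlk.lt_or_gt with hlk | hkl
      · rw [ih l hlk, coeff_zero]
      · exact coeff_eq_zero_of_support_subset_image_Ici hm.monotone (hsupp l) (hm hkl)
    have hsupp' : (p k).support ⊆ (Ioi k).image m := by
      intro N hN
      obtain ⟨i, hi, rfl⟩ := mem_image.mp (hsupp k hN)
      refine mem_image.mpr ⟨i, mem_Ioi.mpr (lt_of_le_of_ne (mem_Ici.mp hi) ?_), rfl⟩
      rintro rfl
      exact mem_support_iff.mp hN hcoeff
    refine eq_zero_of_pow_X_sub_C_dvd_of_card_support_le ha (hdvd k) ?_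
    grw [hsupp', card_image_le, Fin.card_Ioi]
    omega

theorem iteratedDeriv_eval {𝕜 : Type*} [NontriviallyNormedField 𝕜] (p : 𝕜[X]) (j : ℕ) :
    iteratedDeriv j (fun x => p.eval x) = fun x => (derivative^[j] p).eval x := by
  induction j generalizing p with
  | zero => rfl
  | succ j ih =>
    have hderiv : (deriv fun x => p.eval x) = fun x => (derivative p).eval x := by
      ext x
      exact p.deriv
    rw [iteratedDeriv_succ', hderiv, ih, Function.iterate_succ_apply]

end Polynomial

theorem Fin.Ioi_castSucc {n : ℕ} (k : Fin n) : Ioi k.castSucc = Ici k.succ := by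
  ext i
  simp [Fin.castSucc_lt_iff_succ_le]

theorem divSum_tail_eq_sum_Ici {n : ℕ} (x : Fin (n + 1) → ℝ) (f : ℝ → ℝ) (k : Fin (n + 1)) :
    divSum (n - k.val) (fun i => x ⟨k.val + i.val, by omega⟩) f =
      ∑ i ∈ Ici k, f (x i) / ∏ j ∈ (Ici k).erase i, (x i - x j) := by
  let e : Fin (n - k.val + 1) ↪ Fin (n + 1) :=
    ⟨fun i => ⟨k.val + i.val, by omega⟩, fun i j h => by simpa [Fin.ext_iff] using h⟩
  have he : univ.map e = Ici k := by
    ext i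
    simp only [mem_map, mem_univ, true_and, mem_Ici, Fin.le_def]
    refine ⟨fun ⟨j, hj⟩ => hj ▸ Nat.le_add_right _ _,
      fun hi => ⟨⟨i.val - k.val, by omega⟩, Fin.ext ?_⟩⟩
    change k.val + (i.val - k.val) = i.val
    omega
  rw [← he, sum_map]
  refine sum_congr rfl fun i _ => ?_
  rw [← map_erase, prod_map]
  rfl

noncomputable def gbCoeff (n : ℕ) (m : Fin (n + 1) → ℕ) (k i : Fin (n + 1)) : ℝ :=
  (-1) ^ (n - k.val) * (∏ j ∈ Ioi k, (m j : ℝ)) / ∏ j ∈ (Ici k).erase i, ((m i : ℝ) - m j)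

noncomputable def gbPoly (n : ℕ) (m : Fin (n + 1) → ℕ) (k : Fin (n + 1)) : ℝ[X] :=
  ∑ i ∈ Ici k, C (gbCoeff n m k i) * X ^ m i

section

variable {n : ℕ} {m : Fin (n + 1) → ℕ}

theorem gbPoly_last : gbPoly n m (Fin.last n) = X ^ m (Fin.last n) := by
  simp [gbPoly, gbCoeff, ← Fin.top_eq_last, Ici_top]

theorem GB_eq_eval_gbPoly (k : Fin (n + 1)) :
    GB n (fun i => (m i : ℝ)) k = fun t => (gbPoly n m k).eval t := by
  ext t
  rw [GB]
  split_ifs with hk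
  · obtain rfl : k = Fin.last n := Fin.ext hk
    simp [gbPoly_last]
  · rw [divSum_tail_eq_sum_Ici (fun i => (m i : ℝ)), gbPoly, eval_finsetSum, mul_sum]
    refine sum_congr rfl fun i _ => ?_
    simp only [gbCoeff, eval_mul, eval_C, eval_pow, eval_X, Real.rpow_natCast]
    ring

theorem support_gbPoly_subset (k : Fin (n + 1)) : (gbPoly n m k).support ⊆ (Ici k).image m :=
  support_sum_C_mul_X_pow_subset _ _ _

theorem iterate_derivative_gbPoly_eval_one (hm : StrictMono m) {k : Fin (n + 1)} {j : ℕ}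
    (hj : j < n - k.val) : (derivative^[j] (gbPoly n m k)).eval 1 = 0 := by
  have hinj : Set.InjOn (fun i => (m i : ℝ)) (Ici k) :=
    fun i _ j _ h => hm.injective (Nat.cast_injective h)
  have hdeg : (descPochhammer ℝ j).degree < #(Ici k) := by
    rw [degree_eq_natDegree (monic_descPochhammer ℝ j).ne_zero, descPochhammer_natDegree,
      Fin.card_Ici]
    exact_mod_cast (by omega : j < n + 1 - k.val)
  have hcoeff : (descPochhammer ℝ j).coeff (#(Ici k) - 1) = 0 := by
    apply coeff_eq_zero_of_natDegree_lt
    rw [descPochhammer_natDegree, Fin.card_Ici]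
    omega
  rw [Lagrange.coeff_eq_sum hinj hdeg] at hcoeff
  calc (derivative^[j] (gbPoly n m k)).eval 1
      = (-1) ^ (n - k.val) * (∏ j ∈ Ioi k, (m j : ℝ)) * ∑ i ∈ Ici k,
          (descPochhammer ℝ j).eval (m i : ℝ) / ∏ l ∈ (Ici k).erase i, ((m i : ℝ) - m l) := by
        simp only [gbPoly, iterate_derivative_sum, iterate_derivative_C_mul,
          iterate_derivative_X_pow_eq_C_mul, eval_finsetSum, mul_sum]
        refine sum_congr rfl fun i _ => ?_
        simp only [eval_mul, eval_C, eval_pow, eval_X, one_pow, mul_one, gbCoeff,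
          descPochhammer_eval_eq_descFactorial]
        ring
    _ = 0 := by rw [hcoeff, mul_zero]

theorem X_mul_derivative_gbPoly (k : Fin (n + 1)) :
    X * derivative (gbPoly n m k) = ∑ i ∈ Ici k, C (gbCoeff n m k i * m i) * X ^ m i := by
  simp only [gbPoly, derivative_sum, mul_sum, X_mul_derivative_C_mul_X_pow]

theorem gbCoeff_castSucc_mul_sub (hm : StrictMono m) (k : Fin n) {i : Fin (n + 1)}
    (hi : k.succ ≤ i) :
    gbCoeff n m k.castSucc i * (m i - m k.castSucc) = -(m k.succ * gbCoeff n m k.succ i) := by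
  have hki : k.castSucc < i := Fin.castSucc_lt_iff_succ_le.mpr hi
  have hsub : (m i : ℝ) - m k.castSucc ≠ 0 := sub_ne_zero.mpr (by exact_mod_cast (hm hki).ne')
  have hsign : (-1 : ℝ) ^ (n - k.castSucc.val) = -(-1) ^ (n - k.succ.val) := by
    rw [Fin.val_castSucc, Fin.val_succ, show n - k.val = n - (k.val + 1) + 1 by omega, pow_succ]
    ring
  have hnum : ∏ j ∈ Ioi k.castSucc, (m j : ℝ) = m k.succ * ∏ j ∈ Ioi k.succ, (m j : ℝ) := by
    rw [Fin.Ioi_castSucc, ← Ioi_insert, prod_insert notMem_Ioi_self]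
  have hden : ∏ j ∈ (Ici k.castSucc).erase i, ((m i : ℝ) - m j) =
      (m i - m k.castSucc) * ∏ j ∈ (Ici k.succ).erase i, ((m i : ℝ) - m j) := by
    rw [← Ioi_insert, erase_insert_of_ne hki.ne, Fin.Ioi_castSucc, prod_insert (by simp)]
  rw [gbCoeff, gbCoeff, hsign, hnum, hden]
  field_simp

theorem X_mul_derivative_gbPoly_castSucc (hm : StrictMono m) (k : Fin n) :
    X * derivative (gbPoly n m k.castSucc) =
      C (m k.castSucc : ℝ) * gbPoly n m k.castSucc - C (m k.succ : ℝ) * gbPoly n m k.succ := by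
  have hIci : Ici k.castSucc = insert k.castSucc (Ici k.succ) := by
    rw [← Fin.Ioi_castSucc, Ioi_insert]
  have hnotMem : k.castSucc ∉ Ici k.succ := by simp
  rw [X_mul_derivative_gbPoly, gbPoly, gbPoly, hIci, sum_insert hnotMem, sum_insert hnotMem,
    mul_add, add_sub_assoc, mul_sum, mul_sum, ← sum_sub_distrib]
  congr 1
  · rw [← mul_assoc, ← C_mul, mul_comm (m _ : ℝ)]
  · refine sum_congr rfl fun i hi => ?_
    rw [← mul_assoc, ← mul_assoc, ← C_mul, ← C_mul, ← sub_mul, ← C_sub]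
    congr 2
    linear_combination gbCoeff_castSucc_mul_sub hm k (mem_Ici.mp hi)

theorem X_mul_derivative_gbPoly_last :
    X * derivative (gbPoly n m (Fin.last n)) =
      C (m (Fin.last n) : ℝ) * gbPoly n m (Fin.last n) := by
  rw [gbPoly_last]
  simpa using X_mul_derivative_C_mul_X_pow (1 : ℝ) (m (Fin.last n))

theorem gbPoly_eval_one (hm : StrictMono m) (k : Fin (n + 1)) :
    (gbPoly n m k).eval 1 = if k = Fin.last n then 1 else 0 := by
  split_ifs with hk
  · simp [hk, gbPoly_last]
  · exact iterate_derivative_gbPoly_eval_one (j := 0) hm (by have := Fin.val_lt_last hk; omega)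

theorem sum_gbPoly (hm : StrictMono m) (h0 : m 0 = 0) : ∑ k, gbPoly n m k = 1 := by
  set P := ∑ k, gbPoly n m k
  have hθ : X * derivative P = 0 := by
    have hsucc := Fin.sum_univ_succ fun k => C (m k : ℝ) * gbPoly n m k
    have hcast := Fin.sum_univ_castSucc fun k => C (m k : ℝ) * gbPoly n m k
    rw [derivative_sum, mul_sum, Fin.sum_univ_castSucc, X_mul_derivative_gbPoly_last]
    simp only [X_mul_derivative_gbPoly_castSucc hm, sum_sub_distrib]
    rw [h0, Nat.cast_zero, C_0, zero_mul, zero_add] at hsucc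
    linear_combination hsucc - hcast
  have hconst : P = C (P.coeff 0) := by
    ext N
    rcases N with _ | N
    · simp
    · have := congrArg (coeff · (N + 1)) hθ
      simp only [coeff_X_mul_derivative, coeff_zero, mul_eq_zero, Nat.cast_eq_zero,
        N.succ_ne_zero, false_or] at this
      rw [this, coeff_C, if_neg N.succ_ne_zero]
  have hP1 : P.eval 1 = 1 := by
    simp [P, eval_finsetSum, gbPoly_eval_one hm]
  rw [hconst, eval_C] at hP1
  rw [hconst, hP1, C_1]

theorem eq_gbPoly_of_sum_eq_one (hm : StrictMono m) (h0 : m 0 = 0) (R : Fin (n + 1) → ℝ[X])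
    (hsupp : ∀ k, (R k).support ⊆ (Ici k).image m) (hdvd : ∀ k, (X - C 1) ^ (n - k.val) ∣ R k)
    (hsum : ∑ k, R k = 1) (k : Fin (n + 1)) : R k = gbPoly n m k := by
  refine sub_eq_zero.mp (eq_zero_of_sum_eq_zero_of_support_subset_of_dvd hm one_ne_zero
    (fun k => R k - gbPoly n m k) (fun k => ?_) (fun k => dvd_sub (hdvd k) ?_) ?_ k)
  · rw [sub_eq_add_neg]
    exact support_add.trans
      (union_subset (hsupp k) (support_neg.trans_subset (support_gbPoly_subset k)))
  · exact pow_X_sub_C_dvd_of_iterate_derivative_eval_eq_zero fun j hj =>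
      iterate_derivative_gbPoly_eval_one hm hj
  · rw [sum_sub_distrib, hsum, sum_gbPoly hm h0, sub_self]

end

/-- The Gelfond-Bernstein basis is the unique normalized family in
 with the prescribed vanishing orders at  and . -/
theorem stmt7 (n : ℕ) (m : Fin (n+1) → ℕ) (hm : StrictMono m) (h0 : m 0 = 0) :
    (∀ t ∈ Set.Icc (0:ℝ) 1, ∑ k : Fin (n+1), GB n (fun i => (m i : ℝ)) k t = 1) ∧
    (∀ k : Fin (n+1), ∀ j < m k, iteratedDeriv j (GB n (fun i => (m i : ℝ)) k) 0 = 0) ∧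
    (∀ k : Fin (n+1), ∀ j < n - k.val, iteratedDeriv j (GB n (fun i => (m i : ℝ)) k) 1 = 0) ∧
    (∀ G : Fin (n+1) → ℝ → ℝ,
      (∀ k, ∃ a : Fin (n+1) → ℝ, ∀ t : ℝ, G k t = ∑ i : Fin (n+1), a i * t ^ (m i)) →
      (∀ t ∈ Set.Icc (0:ℝ) 1, ∑ k : Fin (n+1), G k t = 1) →
      (∀ k : Fin (n+1), ∀ j < m k, iteratedDeriv j (G k) 0 = 0) →
      (∀ k : Fin (n+1), ∀ j < n - k.val, iteratedDeriv j (G k) 1 = 0) →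
      ∀ (k : Fin (n+1)) (t : ℝ), G k t = GB n (fun i => (m i : ℝ)) k t) := by
  simp only [GB_eq_eval_gbPoly, iteratedDeriv_eval, iterate_derivative_eval_zero]
  refine ⟨fun t _ => ?_, fun k j hj => ?_, fun k j hj => ?_, fun G hG hGsum hG0 hG1 k t => ?_⟩
  · rw [← eval_finsetSum, sum_gbPoly hm h0, eval_one]
  · rw [coeff_eq_zero_of_support_subset_image_Ici hm.monotone (support_gbPoly_subset k) hj,
      mul_zero]
  · exact iterate_derivative_gbPoly_eval_one hm hj
  choose a ha using hG
  set R : Fin (n + 1) → ℝ[X] := fun k => ∑ i, C (a k i) * X ^ m i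
  have hGR : ∀ k, G k = fun t => (R k).eval t := fun k => funext fun t => by
    simp [R, ha, eval_finsetSum]
  simp only [hGR, iteratedDeriv_eval, iterate_derivative_eval_zero] at hG0 hG1 hGsum ⊢
  have hRsum : ∑ k, R k = 1 := by
    refine eq_of_infinite_eval_eq _ _ ((Set.Icc_infinite zero_lt_one).mono fun t ht => ?_)
    simpa [eval_finsetSum] using hGsum t ht
  have hsupp k : (R k).support ⊆ (Ici k).image m :=
    support_subset_image_Ici hm (support_sum_C_mul_X_pow_subset _ _ _) fun N hN =>
      (mul_eq_zero.mp (hG0 k N hN)).resolve_left (Nat.cast_ne_zero.mpr N.factorial_ne_zero)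
  rw [eq_gbPoly_of_sum_eq_one hm h0 R hsupp
    (fun k => pow_X_sub_C_dvd_of_iterate_derivative_eval_eq_zero (hG1 k)) hRsum k]
end

section
/- Let 0 = r_0 < r_1 < ... < r_n be real numbers. For each k with 1 \le k \le n, t^{r_k} = \sum_{j=k}^{n} p_j H^n_{j,\Lambda}(t) for all t \in (0,1], where p_j = \prod_{i=j+1}^{n} (1 - r_k/r_i) for k \le j \le n-1 and p_n = 1. -/
/-! With `f x = t ^ x`, the coefficient of `GB n r j t` combines with the factor
`(-1) ^ (n - j) * r (j+1) ⋯ r n` into `ω j (r k)`, where `ω j x = ∏ l > j, (x - r l)`. The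
right-hand side is therefore Newton's form `∑ j, ω j x * [r j, …, r n] f` of the polynomial
interpolating `f` at the nodes `r k, …, r n`, evaluated at `x = r k`. Collecting the
coefficient of each `f (r i)` turns Newton's form into Lagrange's form by a telescoping sum,
and Lagrange's form returns `f (r k)` at the node `r k`. -/

open Finset

theorem sum_prod_erase_div_mul_eq_of_mem {ι : Type*} [DecidableEq ι] {s : Finset ι} {r : ι → ℝ}
    (hr : Set.InjOn r s) (f : ι → ℝ) {k : ι} (hk : k ∈ s) :
    ∑ i ∈ s, (∏ l ∈ s.erase i, (r k - r l) / (r i - r l)) * f i = f k := by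
  rw [sum_eq_single_of_mem k hk fun i _ hik => ?_]
  · rw [prod_eq_one fun l hl => div_self (sub_ne_zero.mpr fun h =>
      ne_of_mem_erase hl (hr (mem_of_mem_erase hl) hk h.symm)), one_mul]
  · rw [prod_eq_zero (mem_erase.mpr ⟨hik.symm, hk⟩) (by rw [sub_self, zero_div]), zero_mul]

theorem prod_one_sub_div_mul_neg_one_pow_mul_prod {ι : Type*} (s : Finset ι) {r : ι → ℝ}
    (hr : ∀ l ∈ s, r l ≠ 0) (x : ℝ) :
    (∏ l ∈ s, (1 - x / r l)) * ((-1) ^ #s * ∏ l ∈ s, r l) = ∏ l ∈ s, (x - r l) := by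
  rw [← prod_const, ← prod_mul_distrib, ← prod_mul_distrib]
  refine prod_congr rfl fun l hl => ?_
  field_simp [hr l hl]
  ring

section NewtonLagrange

variable {ι : Type*} [LinearOrder ι] [LocallyFiniteOrder ι] [LocallyFiniteOrderTop ι]
  [SuccOrder ι] [WellFoundedGT ι] {r : ι → ℝ}

/- The right-hand side is the Lagrange basis function of the node `r i` for the nodes
`r l`, `l ≥ m`, at `x`; adding the node `r m` multiplies it by `(x - r m) / (r i - r m)`,
which makes the sum telescope. -/
theorem sum_Icc_prod_Ioi_div_prod_erase (hr : Function.Injective r) (x : ℝ) {m i : ι}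
    (hmi : m ≤ i) :
    ∑ j ∈ Icc m i, (∏ l ∈ Ioi j, (x - r l)) / ∏ l ∈ (Ici j).erase i, (r i - r l)
      = ∏ l ∈ (Ici m).erase i, (x - r l) / (r i - r l) := by
  induction m using WellFoundedGT.induction with
  | _ m ih =>
  rcases hmi.eq_or_lt with rfl | hmi
  · rw [Icc_self, sum_singleton, Ici_erase, prod_div_distrib]
  have hm : ¬IsMax m := hmi.not_isMax
  have hsucc : m < Order.succ m := Order.lt_succ_of_not_isMax hm
  have hIci : (Ici m).erase i = insert m ((Ioi m).erase i) := by
    rw [← Ioi_insert, erase_insert_of_ne hmi.ne]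
  have hm_notMem : m ∉ (Ioi m).erase i := by simp
  have hrim : r i - r m ≠ 0 := sub_ne_zero.mpr (hr.ne hmi.ne')
  rw [← insert_Icc_succ_left_eq_Icc hmi.le, sum_insert (by simp [hm]),
    ih _ hsucc (Order.succ_le_of_lt hmi), Ici_succ_eq_Ioi_of_not_isMax hm,
    ← mul_prod_erase _ _ (mem_Ioi.mpr hmi), hIci, prod_insert hm_notMem,
    prod_insert hm_notMem, prod_div_distrib]
  field_simp
  ring

theorem sum_prod_Ioi_mul_sum_div_prod_erase (hr : Function.Injective r) (f : ι → ℝ) (x : ℝ)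
    (k : ι) :
    ∑ j ∈ Ici k, (∏ l ∈ Ioi j, (x - r l)) * ∑ i ∈ Ici j, f i / ∏ l ∈ (Ici j).erase i, (r i - r l)
      = ∑ i ∈ Ici k, (∏ l ∈ (Ici k).erase i, (x - r l) / (r i - r l)) * f i := by
  simp_rw [mul_sum, ← mul_comm_div]
  rw [sum_comm' (t' := Ici k) (s' := fun i => Icc k i) fun j i => by
    simp only [mem_Ici, mem_Icc]
    exact ⟨fun h => ⟨h, h.1.trans h.2⟩, fun h => h.1⟩]
  refine sum_congr rfl fun i hi => ?_
  rw [← sum_mul, sum_Icc_prod_Ioi_div_prod_erase hr x (mem_Ici.mp hi)]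

end NewtonLagrange

def shiftEmb {n : ℕ} (j : Fin (n + 1)) : Fin (n - j + 1) ↪ Fin (n + 1) where
  toFun i := ⟨j + i, by omega⟩
  inj' a b h := Fin.ext (by simpa using congrArg Fin.val h)

theorem map_univ_shiftEmb {n : ℕ} (j : Fin (n + 1)) : univ.map (shiftEmb j) = Ici j := by
  ext l
  simp only [mem_map, mem_univ, true_and, mem_Ici, Fin.le_def]
  exact ⟨fun ⟨i, hi⟩ => hi ▸ Nat.le_add_right _ _,
    fun h => ⟨⟨l - j, by omega⟩, Fin.ext (show j + (l - j : ℕ) = l by omega)⟩⟩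

theorem GB_eq_sum (n : ℕ) (r : Fin (n + 1) → ℝ) (j : Fin (n + 1)) (t : ℝ) :
    GB n r j t = (-1) ^ (n - j) * (∏ l ∈ Ioi j, r l) *
      ∑ i ∈ Ici j, t ^ r i / ∏ l ∈ (Ici j).erase i, (r i - r l) := by
  unfold GB
  split_ifs with hj
  · obtain rfl : j = ⊤ := Fin.ext hj
    simp [Ici_top]
  · rw [divSum, ← map_univ_shiftEmb, sum_map]
    simp_rw [← map_erase, prod_map]
    rfl

theorem stmt10_general (n : ℕ) (r : Fin (n+1) → ℝ) (hr : StrictMono r) (h0 : r 0 = 0)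
    (k : Fin (n+1)) (hk : 1 ≤ k.val) (t : ℝ) :
    t ^ (r k) = ∑ j ∈ Finset.Ici k, (∏ i ∈ Finset.Ioi j, (1 - r k / r i)) * GB n r j t := by
  have hr_ne_zero : ∀ j ∈ Ici k, ∀ l ∈ Ioi j, r l ≠ 0 := by
    intro j hj l hl
    rw [mem_Ici, Fin.le_def] at hj
    rw [mem_Ioi, Fin.lt_def] at hl
    have hl_pos : r 0 < r l := hr (Fin.lt_def.mpr (by rw [Fin.val_zero]; omega))
    exact (h0 ▸ hl_pos).ne'
  calc t ^ r k
      = ∑ i ∈ Ici k, (∏ l ∈ (Ici k).erase i, (r k - r l) / (r i - r l)) * t ^ r i :=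
        (sum_prod_erase_div_mul_eq_of_mem hr.injective.injOn (fun i => t ^ r i)
          (mem_Ici.mpr le_rfl)).symm
    _ = ∑ j ∈ Ici k, (∏ l ∈ Ioi j, (r k - r l)) *
          ∑ i ∈ Ici j, t ^ r i / ∏ l ∈ (Ici j).erase i, (r i - r l) :=
        (sum_prod_Ioi_mul_sum_div_prod_erase hr.injective _ _ k).symm
    _ = ∑ j ∈ Ici k, (∏ l ∈ Ioi j, (1 - r k / r l)) * GB n r j t := by
        refine sum_congr rfl fun j hj => ?_
        have hcard : n - j = #(Ioi j) := by simp
        rw [GB_eq_sum, ← mul_assoc, hcard,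
          prod_one_sub_div_mul_neg_one_pow_mul_prod _ (hr_ne_zero j hj)]

/-- Gelfond-Bernstein control points of the monomial t ^ (r k): for 1 <= k <= n,
t ^ (r k) is the combination of H_j, j = k, ..., n, with the stated coefficients
(the coefficient for j = n being the empty product, i.e. 1). -/
theorem stmt10 (n : ℕ) (r : Fin (n+1) → ℝ) (hr : StrictMono r) (h0 : r 0 = 0)
    (k : Fin (n+1)) (hk : 1 ≤ k.val) (t : ℝ) (ht : t ∈ Set.Ioc (0:ℝ) 1) :
    t ^ (r k) = ∑ j ∈ Finset.Ici k, (∏ i ∈ Finset.Ioi j, (1 - r k / r i)) * GB n r j t :=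
  stmt10_general n r hr h0 k hk t
end

section
/- Let \lambda = (\lambda_1,...,\lambda_k,\mu_1,...,\mu_h) be a partition of length at most k+h. Then for variables z_1,...,z_k and y_1,...,y_h, the limit as \epsilon \to 0 of S_\lambda(z_1,...,z_k, \epsilon y_1, ..., \epsilon y_h) / \epsilon^{|\mu|} equals S_{(\lambda_1,...,\lambda_k)}(z_1,...,z_k) \cdot S_{(\mu_1,...,\mu_h)}(y_1,...,y_h), where |\mu| = \mu_1 + ... + \mu_h. -/
/-- The cells of the skew Young diagram `lam / mu`: pairs `(i, c)` with
`mu i ≤ c < lam i`. -/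
def sCells (m : ℕ) (mu lam : Fin m → ℕ) : Finset (Fin m × ℕ) :=
  Finset.univ.biUnion fun i => (Finset.Ico (mu i) (lam i)).image fun c => (i, c)

/-- A filling of the skew shape is semistandard if rows are weakly increasing
(left to right) and columns are strictly increasing (top to bottom). -/
def IsSSYT {m nv : ℕ} (mu lam : Fin m → ℕ) (T : sCells m mu lam → Fin nv) : Prop :=
  (∀ a b : sCells m mu lam, (a : Fin m × ℕ).1 = (b : Fin m × ℕ).1 →
      (a : Fin m × ℕ).2 ≤ (b : Fin m × ℕ).2 → T a ≤ T b) ∧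
  (∀ a b : sCells m mu lam, (a : Fin m × ℕ).1 < (b : Fin m × ℕ).1 →
      (a : Fin m × ℕ).2 = (b : Fin m × ℕ).2 → T a < T b)

open Classical in
/-- The skew Schur polynomial of shape `lam / mu` in the variables `u`, as the
generating function of semistandard tableaux: each tableau contributes the product
over the variables of `u k` raised to the number of entries equal to `k`. -/
noncomputable def skewSchur (m nv : ℕ) (mu lam : Fin m → ℕ) (u : Fin nv → ℝ) : ℝ :=
  ∑ T : sCells m mu lam → Fin nv,
    if IsSSYT mu lam T then
      ∏ k : Fin nv, u k ^ (Finset.univ.filter fun a => T a = k).card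
    else 0

/-- The Schur polynomial of shape `lam` in the variables `u`. -/
noncomputable def schur (m nv : ℕ) (lam : Fin m → ℕ) (u : Fin nv → ℝ) : ℝ :=
  skewSchur m nv (fun _ => 0) lam u

open Finset Filter Topology

/-!
Expand the Schur polynomial as a sum over semistandard tableaux `T` of shape `λμ` with entries
in the `k + h` variables. Substituting `ε y` for the last `h` variables turns the weight of `T`
into `ε ^ N(T)` times its weight at `(z, y)`, where `N(T)` counts the entries `≥ k`. Column
strictness forces every entry in row `i` to be `≥ i` (rows and entries counted from `0`), so all
entries in the last `h` rows are `≥ k` and `N(T) ≥ |μ|`, with equality exactly when the first `k`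
rows only use entries `< k`. These tableaux are precisely the concatenations of a tableau of
shape `λ` in the `z`'s with a tableau of shape `μ` in the `y`'s, so the coefficient of `ε ^ |μ|`
is `S_λ(z) S_μ(y)`, and all other terms vanish in the limit.
-/

namespace Fin

theorem castAdd_lt_natAdd {m n : ℕ} (i : Fin m) (j : Fin n) : castAdd n i < natAdd m j := by
  simp only [lt_def, val_castAdd, val_natAdd]
  omega

theorem castAdd_ne_natAdd {m n : ℕ} (i : Fin m) (j : Fin n) : castAdd n i ≠ natAdd m j :=
  (castAdd_lt_natAdd i j).ne

theorem castAdd_le_castAdd_iff {m n : ℕ} {i j : Fin m} : castAdd n i ≤ castAdd n j ↔ i ≤ j :=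
  .rfl

theorem castAdd_lt_castAdd_iff {m n : ℕ} {i j : Fin m} : castAdd n i < castAdd n j ↔ i < j :=
  .rfl

end Fin

theorem tendsto_sum_mul_pow_div_pow {ι : Type*} (s : Finset ι) (c : ι → ℝ) (n : ι → ℕ) {M : ℕ}
    (hM : ∀ i ∈ s, M ≤ n i) :
    Tendsto (fun ε : ℝ => (∑ i ∈ s, c i * ε ^ n i) / ε ^ M) (𝓝[≠] 0)
      (𝓝 (∑ i ∈ s with n i = M, c i)) := by
  have hcont : Continuous fun ε : ℝ => ∑ i ∈ s, c i * ε ^ (n i - M) := by fun_prop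
  have hzero : ∑ i ∈ s, c i * (0 : ℝ) ^ (n i - M) = ∑ i ∈ s with n i = M, c i := by
    rw [sum_filter]
    refine sum_congr rfl fun i hi => ?_
    simp [zero_pow_eq, Nat.sub_eq_zero_iff_le, (hM i hi).ge_iff_eq']
  rw [← hzero]
  refine (hcont.tendsto 0).mono_left nhdsWithin_le_nhds |>.congr' ?_
  filter_upwards [self_mem_nhdsWithin] with ε hε
  rw [sum_div]
  refine sum_congr rfl fun i hi => ?_
  rw [← pow_sub_mul_pow ε (hM i hi), ← mul_assoc, mul_div_cancel_right₀ _ (pow_ne_zero M hε)]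

theorem prod_pow_card_filter_eq_prod {α β M : Type*} [Fintype α] [Fintype β] [DecidableEq β]
    [CommMonoid M] (u : β → M) (g : α → β) :
    ∏ b, u b ^ #{a | g a = b} = ∏ a, u (g a) := by
  rw [← prod_fiberwise' univ g u]
  simp

open Classical in
theorem skewSchur_eq_sum_prod (m nv : ℕ) (mu lam : Fin m → ℕ) (u : Fin nv → ℝ) :
    skewSchur m nv mu lam u = ∑ T with IsSSYT mu lam T, ∏ a, u (T a) := by
  simp only [skewSchur, prod_pow_card_filter_eq_prod, sum_filter]

theorem mem_sCells {m : ℕ} {mu lam : Fin m → ℕ} {p : Fin m × ℕ} :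
    p ∈ sCells m mu lam ↔ mu p.1 ≤ p.2 ∧ p.2 < lam p.1 := by
  simp [sCells, Prod.ext_iff]

theorem card_sCells (m : ℕ) (mu lam : Fin m → ℕ) : #(sCells m mu lam) = ∑ i, (lam i - mu i) := by
  rw [sCells, card_biUnion]
  · simp [card_image_of_injective _ (Prod.mk_right_injective _)]
  · intro i _ j _ hij
    simp only [Function.onFun, disjoint_left, mem_image]
    rintro _ ⟨c, -, rfl⟩ ⟨d, -, hd⟩
    exact hij (congrArg Prod.fst hd).symm

theorem val_fst_le_of_isSSYT {m nv : ℕ} {Λ : Fin m → ℕ} (hΛ : Antitone Λ)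
    {T : sCells m (fun _ => 0) Λ → Fin nv} (hT : IsSSYT (fun _ => 0) Λ T)
    (a : sCells m (fun _ => 0) Λ) : (a.1.1 : ℕ) ≤ T a := by
  suffices ∀ n (a : sCells m (fun _ => 0) Λ), (a.1.1 : ℕ) = n → n ≤ T a from this _ a rfl
  intro n
  induction n with
  | zero => simp
  | succ n ih =>
    rintro ⟨⟨i, c⟩, ha⟩ hi
    have hn : n < m := by omega
    have habove : ((⟨n, hn⟩ : Fin m), c) ∈ sCells m (fun _ => 0) Λ :=
      mem_sCells.2 ⟨Nat.zero_le _,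
        (mem_sCells.1 ha).2.trans_le (hΛ (by simp [Fin.le_def] at hi ⊢; omega))⟩
    have hlt := hT.2 ⟨_, habove⟩ ⟨_, ha⟩ (by simp [Fin.lt_def] at hi ⊢; omega) rfl
    have := ih ⟨_, habove⟩ rfl
    rw [Fin.lt_def] at hlt
    omega

section AppendShape

variable {k h : ℕ} {lam : Fin k → ℕ} {mu : Fin h → ℕ}

def castAddCell (mu : Fin h → ℕ) (a : sCells k (fun _ => 0) lam) :
    sCells (k + h) (fun _ => 0) (Fin.append lam mu) :=
  ⟨(Fin.castAdd h a.1.1, a.1.2), by simpa [mem_sCells] using (mem_sCells.1 a.2).2⟩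

def natAddCell (lam : Fin k → ℕ) (b : sCells h (fun _ => 0) mu) :
    sCells (k + h) (fun _ => 0) (Fin.append lam mu) :=
  ⟨(Fin.natAdd k b.1.1, b.1.2), by simpa [mem_sCells] using (mem_sCells.1 b.2).2⟩

@[simp] theorem castAddCell_fst (a : sCells k (fun _ => 0) lam) :
    (castAddCell mu a).1.1 = Fin.castAdd h a.1.1 := rfl

@[simp] theorem castAddCell_snd (a : sCells k (fun _ => 0) lam) :
    (castAddCell mu a).1.2 = a.1.2 := rfl

@[simp] theorem natAddCell_fst (b : sCells h (fun _ => 0) mu) :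
    (natAddCell lam b).1.1 = Fin.natAdd k b.1.1 := rfl

@[simp] theorem natAddCell_snd (b : sCells h (fun _ => 0) mu) :
    (natAddCell lam b).1.2 = b.1.2 := rfl

theorem bijective_sumElim_castAddCell_natAddCell :
    Function.Bijective (Sum.elim (castAddCell mu) (natAddCell lam)) := by
  refine ⟨Function.Injective.sumElim ?_ ?_ ?_, ?_⟩
  · intro a a' h
    have h' := congrArg Subtype.val h
    simp only [castAddCell, Prod.mk.injEq, Fin.castAdd_inj] at h'
    exact Subtype.ext (Prod.ext h'.1 h'.2)
  · intro b b' h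
    have h' := congrArg Subtype.val h
    simp only [natAddCell, Prod.mk.injEq, Fin.natAdd_inj] at h'
    exact Subtype.ext (Prod.ext h'.1 h'.2)
  · intro a b h
    have h' := congrArg (fun c => (c.1.1 : ℕ)) h
    simp only [castAddCell_fst, natAddCell_fst, Fin.val_castAdd, Fin.val_natAdd] at h'
    omega
  · rintro ⟨⟨r, c⟩, hmem⟩
    induction r using Fin.addCases with
    | left i => exact ⟨.inl ⟨(i, c), by simpa [mem_sCells] using hmem⟩, rfl⟩
    | right j => exact ⟨.inr ⟨(j, c), by simpa [mem_sCells] using hmem⟩, rfl⟩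

variable (lam mu) in
noncomputable def appendCellsEquiv :
    sCells k (fun _ => 0) lam ⊕ sCells h (fun _ => 0) mu ≃
      sCells (k + h) (fun _ => 0) (Fin.append lam mu) :=
  Equiv.ofBijective _ bijective_sumElim_castAddCell_natAddCell

@[simp] theorem appendCellsEquiv_inl (a : sCells k (fun _ => 0) lam) :
    appendCellsEquiv lam mu (.inl a) = castAddCell mu a := rfl

@[simp] theorem appendCellsEquiv_inr (b : sCells h (fun _ => 0) mu) :
    appendCellsEquiv lam mu (.inr b) = natAddCell lam b := rfl

section AppendTableau

variable {p q : ℕ}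

variable (mu) in
noncomputable def appendTableau (T₁ : sCells k (fun _ => 0) lam → Fin p)
    (T₂ : sCells h (fun _ => 0) mu → Fin q) :
    sCells (k + h) (fun _ => 0) (Fin.append lam mu) → Fin (p + q) :=
  fun c => finSumFinEquiv (Sum.map T₁ T₂ ((appendCellsEquiv lam mu).symm c))

@[simp] theorem appendCellsEquiv_symm_castAddCell (a : sCells k (fun _ => 0) lam) :
    (appendCellsEquiv lam mu).symm (castAddCell mu a) = .inl a :=
  (Equiv.symm_apply_eq _).2 rfl

@[simp] theorem appendCellsEquiv_symm_natAddCell (b : sCells h (fun _ => 0) mu) :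
    (appendCellsEquiv lam mu).symm (natAddCell lam b) = .inr b :=
  (Equiv.symm_apply_eq _).2 rfl

variable {T₁ : sCells k (fun _ => 0) lam → Fin p} {T₂ : sCells h (fun _ => 0) mu → Fin q}

@[simp] theorem appendTableau_castAddCell (a : sCells k (fun _ => 0) lam) :
    appendTableau mu T₁ T₂ (castAddCell mu a) = Fin.castAdd q (T₁ a) := by
  simp [appendTableau]

@[simp] theorem appendTableau_natAddCell (b : sCells h (fun _ => 0) mu) :
    appendTableau mu T₁ T₂ (natAddCell lam b) = Fin.natAdd p (T₂ b) := by
  simp [appendTableau]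

theorem isSSYT_appendTableau_iff :
    IsSSYT (fun _ => 0) (Fin.append lam mu) (appendTableau mu T₁ T₂) ↔
      IsSSYT (fun _ => 0) lam T₁ ∧ IsSSYT (fun _ => 0) mu T₂ := by
  simp only [IsSSYT, ← (appendCellsEquiv lam mu).forall_congr_right, Sum.forall,
    appendCellsEquiv_inl, appendCellsEquiv_inr, appendTableau_castAddCell,
    appendTableau_natAddCell, castAddCell_fst, castAddCell_snd, natAddCell_fst, natAddCell_snd]
  simp only [Fin.castAdd_inj, Fin.natAdd_inj, Fin.castAdd_ne_natAdd,
    (Fin.castAdd_ne_natAdd _ _).symm, Fin.castAdd_le_castAdd_iff, Fin.castAdd_lt_castAdd_iff,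
    Fin.natAdd_le_natAdd_iff, Fin.natAdd_lt_natAdd_iff, Fin.castAdd_lt_natAdd,
    (Fin.castAdd_lt_natAdd _ _).not_gt, false_imp_iff, imp_true_iff, imp_false, and_true, true_and]
  exact and_and_and_comm

theorem appendTableau_inj {T₁' : sCells k (fun _ => 0) lam → Fin p}
    {T₂' : sCells h (fun _ => 0) mu → Fin q} :
    appendTableau mu T₁ T₂ = appendTableau mu T₁' T₂' ↔ T₁ = T₁' ∧ T₂ = T₂' := by
  refine ⟨fun hT => ⟨funext fun a => ?_, funext fun b => ?_⟩, fun ⟨h₁, h₂⟩ => h₁ ▸ h₂ ▸ rfl⟩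
  · simpa using congrFun hT (castAddCell mu a)
  · simpa using congrFun hT (natAddCell lam b)

theorem prod_append_appendTableau {M : Type*} [CommMonoid M] (z : Fin p → M) (y : Fin q → M) :
    ∏ c, Fin.append z y (appendTableau mu T₁ T₂ c) = (∏ a, z (T₁ a)) * ∏ b, y (T₂ b) := by
  rw [← (appendCellsEquiv lam mu).prod_comp, Fintype.prod_sum_type]
  simp

theorem exists_appendTableau_eq
    {T : sCells (k + h) (fun _ => 0) (Fin.append lam mu) → Fin (p + q)}
    (hleft : ∀ a, (T (castAddCell mu a) : ℕ) < p) (hright : ∀ b, p ≤ (T (natAddCell lam b) : ℕ)) :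
    ∃ T₁ T₂, appendTableau mu T₁ T₂ = T := by
  refine ⟨fun a => ⟨T (castAddCell mu a), hleft a⟩,
    fun b => ⟨T (natAddCell lam b) - p, by have := hright b; omega⟩, funext fun c => ?_⟩
  obtain ⟨x | x, rfl⟩ := (appendCellsEquiv lam mu).surjective c
  · simp
  · simp only [appendCellsEquiv_inr, appendTableau_natAddCell, Fin.ext_iff, Fin.val_natAdd]
    have := hright x
    omega

end AppendTableau

variable (hpart : Antitone (Fin.append lam mu))
  {T : sCells (k + h) (fun _ => 0) (Fin.append lam mu) → Fin (k + h)}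
  (hT : IsSSYT (fun _ => 0) (Fin.append lam mu) T)
include hpart hT

theorem le_val_natAddCell (b : sCells h (fun _ => 0) mu) : k ≤ (T (natAddCell lam b) : ℕ) :=
  (Nat.le_add_right k _).trans (val_fst_le_of_isSSYT hpart hT (natAddCell lam b))

theorem card_filter_le_entry_eq :
    #{c | k ≤ (T c : ℕ)} = #{a | k ≤ (T (castAddCell mu a) : ℕ)} + ∑ j, mu j := by
  rw [card_filter, card_filter, ← (appendCellsEquiv lam mu).sum_comp, Fintype.sum_sum_type]
  simp only [appendCellsEquiv_inl, appendCellsEquiv_inr, le_val_natAddCell hpart hT, if_true,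
    sum_const, card_univ, Fintype.card_coe, card_sCells, smul_eq_mul, mul_one, Nat.sub_zero]
  rfl

theorem sum_le_card_filter_le_entry : ∑ j, mu j ≤ #{c | k ≤ (T c : ℕ)} := by
  rw [card_filter_le_entry_eq hpart hT]
  exact Nat.le_add_left _ _

theorem card_filter_le_entry_eq_sum_iff :
    #{c | k ≤ (T c : ℕ)} = ∑ j, mu j ↔ ∀ a, (T (castAddCell mu a) : ℕ) < k := by
  rw [card_filter_le_entry_eq hpart hT, Nat.add_eq_right, card_eq_zero, filter_eq_empty_iff]
  simp only [mem_univ, true_implies, not_le]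

omit hT in
open Classical in
theorem sum_filter_card_eq_schur_mul_schur (z : Fin k → ℝ) (y : Fin h → ℝ) :
    ∑ T ∈ {T | IsSSYT (fun _ => 0) (Fin.append lam mu) T} with #{c | k ≤ (T c : ℕ)} = ∑ j, mu j,
      ∏ c, Fin.append z y (T c) = schur k k lam z * schur h h mu y := by
  rw [schur, schur, skewSchur_eq_sum_prod, skewSchur_eq_sum_prod, sum_mul_sum, ← sum_product']
  symm
  refine sum_bij (fun T _ => appendTableau mu T.1 T.2) ?_ ?_ ?_ ?_
  · rintro ⟨T₁, T₂⟩ hT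
    have hT' := isSSYT_appendTableau_iff.2 (by simpa using hT)
    simp only [mem_filter, mem_univ, true_and, card_filter_le_entry_eq_sum_iff hpart hT']
    exact ⟨hT', fun a => by simp⟩
  · rintro ⟨T₁, T₂⟩ - ⟨T₁', T₂'⟩ - h
    simpa using appendTableau_inj.1 h
  · intro T hT
    simp only [mem_filter, mem_univ, true_and] at hT
    obtain ⟨T₁, T₂, rfl⟩ := exists_appendTableau_eq
      ((card_filter_le_entry_eq_sum_iff hpart hT.1).1 hT.2) (le_val_natAddCell hpart hT.1)
    exact ⟨(T₁, T₂), by simpa using isSSYT_appendTableau_iff.1 hT.1, rfl⟩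
  · rintro ⟨T₁, T₂⟩ -
    exact (prod_append_appendTableau z y).symm

end AppendShape

theorem prod_append_mul_eq_pow_mul_prod {α M : Type*} [Fintype α] [CommMonoid M] {p q : ℕ}
    (z : Fin p → M) (y : Fin q → M) (ε : M) (g : α → Fin (p + q)) :
    ∏ a, Fin.append z (fun j => ε * y j) (g a) =
      ε ^ #{a | p ≤ (g a : ℕ)} * ∏ a, Fin.append z y (g a) := by
  have hfactor (v : Fin (p + q)) :
      Fin.append z (fun j => ε * y j) v =
        ε ^ (if p ≤ (v : ℕ) then 1 else 0) * Fin.append z y v := by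
    induction v using Fin.addCases <;> simp
  simp only [hfactor, prod_mul_distrib, prod_pow_eq_pow_sum, card_filter]

theorem stmt16_general (k h : ℕ) (lam : Fin k → ℕ) (mu : Fin h → ℕ)
    (hpart : Antitone (Fin.append lam mu))
    (z : Fin k → ℝ) (y : Fin h → ℝ) :
    Filter.Tendsto
      (fun ε : ℝ =>
        schur (k + h) (k + h) (Fin.append lam mu) (Fin.append z (fun j => ε * y j))
          / ε ^ (∑ j : Fin h, mu j))
      (nhdsWithin 0 {(0 : ℝ)}ᶜ)
      (nhds (schur k k lam z * schur h h mu y)) := by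
  classical
  have hexpand (ε : ℝ) :
      schur (k + h) (k + h) (Fin.append lam mu) (Fin.append z (fun j => ε * y j)) =
        ∑ T with IsSSYT (fun _ => 0) (Fin.append lam mu) T,
          (∏ c, Fin.append z y (T c)) * ε ^ #{c | k ≤ (T c : ℕ)} := by
    simp only [schur, skewSchur_eq_sum_prod, prod_append_mul_eq_pow_mul_prod, mul_comm]
  simp only [hexpand]
  rw [← sum_filter_card_eq_schur_mul_schur hpart]
  exact tendsto_sum_mul_pow_div_pow _ _ _ fun T hT =>
    sum_le_card_filter_le_entry hpart (mem_filter.1 hT).2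

/-- Splitting formula for Schur polynomials: for a partition obtained by appending mu
to lam, scaling the last h variables by eps and dividing by eps^|mu|, the limit as
eps tends to 0 is the product of the two Schur polynomials. -/
theorem stmt16 (k h : ℕ) (lam : Fin k → ℕ) (mu : Fin h → ℕ)
    (hpart : Antitone (Fin.append lam mu))
    (z : Fin k → ℝ) (y : Fin h → ℝ) (hz : ∀ i, 0 < z i) (hy : ∀ i, 0 < y i)
    (hdist : Function.Injective (Fin.append z y)) :
    Filter.Tendsto
      (fun ε : ℝ =>
        schur (k + h) (k + h) (Fin.append lam mu) (Fin.append z (fun j => ε * y j))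
          / ε ^ (∑ j : Fin h, mu j))
      (nhdsWithin 0 {(0 : ℝ)}ᶜ)
      (nhds (schur k k lam z * schur h h mu y)) :=
  stmt16_general k h lam mu hpart z y
end

section
/- Let l \ge 0 and n \ge 1 be integers and \Lambda = (0, l+1, l+2, ..., l+n). The Gelfond-Bernstein basis of span(1, t^{l+1}, ..., t^{l+n}) on [0,1] is H_0(t) = (1-t)^n \sum_{j=0}^{l} \binom{n+j-1}{n-1} t^j and H_k(t) = \binom{n+l}{k+l} t^{l+k} (1-t)^{n-k} for k = 1, ..., n. -/
/-!
For `k ≥ 1` the nodes `l + k, …, l + n` are consecutive integers, and at consecutive nodes the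
divided difference of `x ↦ t ^ x` is the forward difference `t ^ (l + k) * (t - 1) ^ (n - k)`
divided by `(n - k)!`; the prefactor `r_{k+1} ⋯ r_n` turns it into a Bernstein polynomial.

For `k = 0`, splitting off the node `0` leaves `1` plus the divided difference of
`x ↦ t ^ x / x` at the consecutive nodes `l + 1, …, l + n`, i.e. a multiple of
`∫₀ᵗ x ^ l (x - 1) ^ (n - 1) dx`. The claimed closed form takes the same value `1` at `t = 0`,
and an induction on `l` shows that it has the same derivative, a multiple of
`t ^ l (1 - t) ^ (n - 1)`.
-/

section

open Finset Nat

theorem prod_range_erase_natCast_sub {p i : ℕ} (hi : i ≤ p) :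
    ∏ j ∈ (range (p + 1)).erase i, ((i : ℝ) - j) = (-1) ^ (p - i) * i ! * (p - i)! := by
  have hsplit : (range (p + 1)).erase i = range i ∪ Ico (i + 1) (p + 1) := by
    ext j; simp only [mem_erase, mem_range, mem_union, mem_Ico]; omega
  have hdisj : Disjoint (range i) (Ico (i + 1) (p + 1)) := by
    simp only [disjoint_left, mem_range, mem_Ico]; omega
  have hlow : ∏ j ∈ range i, ((i : ℝ) - j) = i ! := by
    rw [← descFactorial_self, descFactorial_eq_prod_range, cast_prod]
    exact prod_congr rfl fun j hj => (cast_sub (mem_range.1 hj).le).symm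
  have hhigh : ∏ j ∈ Ico (i + 1) (p + 1), ((i : ℝ) - j) = (-1) ^ (p - i) * (p - i)! := by
    rw [prod_Ico_eq_prod_range, show p + 1 - (i + 1) = p - i by omega]
    calc ∏ s ∈ range (p - i), ((i : ℝ) - (i + 1 + s : ℕ))
        = ∏ s ∈ range (p - i), ((-1) * ((s + 1 : ℕ) : ℝ)) :=
          prod_congr rfl fun s _ => by push_cast; ring
      _ = (-1) ^ (p - i) * (p - i)! := by
          rw [prod_mul_distrib, prod_const, card_range, ← cast_prod,
            prod_range_add_one_eq_factorial]
  rw [hsplit, prod_union hdisj, hlow, hhigh]; ring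

theorem inv_prod_erase_natCast_sub {p : ℕ} (i : Fin (p + 1)) :
    (∏ j ∈ univ.erase i, ((i : ℝ) - (j : ℕ)))⁻¹ = (-1) ^ (p - i) * p.choose i / p ! := by
  have hi : (i : ℕ) ≤ p := Fin.is_le i
  have hmap : ∏ j ∈ univ.erase i, ((i : ℝ) - (j : ℕ))
      = ∏ j ∈ (range (p + 1)).erase i, ((i : ℝ) - j) := by
    have h := prod_map (univ.erase i) Fin.valEmbedding (fun j : ℕ => (i : ℝ) - j)
    rw [map_erase, Fin.map_valEmbedding_univ, Nat.Iio_eq_range] at h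
    exact h.symm
  have hsign : ((-1 : ℝ) ^ (p - i))⁻¹ = (-1) ^ (p - i) := by rw [← inv_pow, inv_neg, inv_one]
  rw [hmap, prod_range_erase_natCast_sub hi, cast_choose ℝ hi, mul_inv, mul_inv, hsign]
  field_simp

theorem divSum_add_natCast (p : ℕ) (c : ℝ) (f : ℝ → ℝ) :
    divSum p (fun i => c + (i : ℕ)) f
      = (∑ i ∈ range (p + 1), (-1) ^ (p - i) * p.choose i * f (c + i)) / p ! := by
  rw [divSum, sum_div, ← Fin.sum_univ_eq_sum_range
    (fun i => (-1) ^ (p - i) * p.choose i * f (c + i) / p !)]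
  refine sum_congr rfl fun i _ => ?_
  simp_rw [add_sub_add_left_eq_sub]
  rw [div_eq_mul_inv, inv_prod_erase_natCast_sub]
  ring

theorem divSum_natCast_add_rpow (p M : ℕ) (t : ℝ) :
    divSum p (fun i => (M : ℝ) + (i : ℕ)) (fun x => t ^ x) = t ^ M * (t - 1) ^ p / p ! := by
  rw [divSum_add_natCast, sub_eq_add_neg, add_pow, mul_sum]
  congr 1
  refine sum_congr rfl fun i _ => ?_
  rw [← cast_add, Real.rpow_natCast, pow_add]
  ring

theorem divSum_succ (p : ℕ) (x : Fin (p + 2) → ℝ) (f : ℝ → ℝ) :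
    divSum (p + 1) x f = f (x 0) / ∏ j : Fin (p + 1), (x 0 - x j.succ)
      + divSum p (fun i => x i.succ) (fun y => f y / (y - x 0)) := by
  have herase_zero : univ.erase (0 : Fin (p + 2)) = univ.map (Fin.succEmb (p + 1)) := by
    ext j; cases j using Fin.cases <;> simp [Fin.succ_ne_zero]
  have herase_succ (i : Fin (p + 1)) :
      univ.erase i.succ = cons 0 ((univ.erase i).map (Fin.succEmb (p + 1))) (by simp) := by
    ext j; cases j using Fin.cases <;> simp [Fin.succ_ne_zero, eq_comm]
  rw [divSum, Fin.sum_univ_succ, herase_zero, prod_map, divSum]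
  congr 1
  refine sum_congr rfl fun i _ => ?_
  rw [herase_succ, prod_cons, prod_map, div_div]
  rfl

def completeMuntzExponents (l n : ℕ) (i : Fin (n + 1)) : ℝ :=
  if (i : ℕ) = 0 then 0 else (l : ℝ) + (i : ℕ)

theorem prod_Ioi_completeMuntzExponents (l n : ℕ) (k : Fin (n + 1)) :
    ∏ j ∈ Ioi k, completeMuntzExponents l n j = ((l + k + 1).ascFactorial (n - k) : ℝ) := by
  have hIoo : Ioo (k : ℕ) (n + 1) = Ico ((k : ℕ) + 1) (n + 1) := by
    ext; simp only [mem_Ioo, mem_Ico]; omega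
  have h := prod_map (Ioi k) Fin.valEmbedding (fun j : ℕ => if j = 0 then (0 : ℝ) else l + j)
  rw [Fin.map_valEmbedding_Ioi, hIoo, prod_Ico_eq_prod_range,
    show n + 1 - (k + 1) = n - k by omega] at h
  refine h.symm.trans ?_
  rw [ascFactorial_eq_prod_range, cast_prod]
  refine prod_congr rfl fun s _ => ?_
  rw [if_neg (by omega)]
  push_cast; ring

theorem GB_completeMuntzExponents_of_pos (l n : ℕ) (t : ℝ) (k : Fin (n + 1))
    (hk : 1 ≤ (k : ℕ)) :
    GB n (completeMuntzExponents l n) k t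
      = ((n + l).choose (k + l) : ℝ) * t ^ (l + (k : ℕ)) * (1 - t) ^ (n - k) := by
  have hk0 : (k : ℕ) ≠ 0 := by omega
  by_cases hkn : (k : ℕ) = n
  · rw [GB, if_pos hkn, completeMuntzExponents, if_neg hk0, ← cast_add, Real.rpow_natCast,
      hkn, add_comm n l, choose_self, Nat.sub_self]
    simp
  have hpoints : (fun i : Fin (n - k + 1) => completeMuntzExponents l n
      ⟨k + i, by have := i.isLt; have := k.isLt; omega⟩)
        = fun i : Fin (n - k + 1) => ((l + k : ℕ) : ℝ) + (i : ℕ) := by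
    funext i
    rw [completeMuntzExponents, if_neg (by simp [hk0])]
    push_cast; ring
  have hchoose : (l + k + 1).ascFactorial (n - k) = (n - k)! * (n + l).choose (k + l) := by
    rw [ascFactorial_eq_factorial_mul_choose, show l + k + (n - k) = n + l by omega,
      show k + l = n + l - (n - k) by omega, choose_symm (by omega)]
  rw [GB, if_neg hkn, prod_Ioi_completeMuntzExponents, hpoints, divSum_natCast_add_rpow,
    hchoose]
  push_cast
  field_simp
  rw [show (1 - t) = (-1) * (t - 1) by ring, mul_pow]
  ring

-- `∫₀ᵗ x ^ l * (x - 1) ^ m dx`, expanded by the binomial theorem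
noncomputable def betaPoly (l m : ℕ) (t : ℝ) : ℝ :=
  ∑ i ∈ range (m + 1), (-1) ^ (m - i) * m.choose i * t ^ (l + 1 + i) / (l + 1 + i : ℕ)

theorem GB_completeMuntzExponents_zero (l m : ℕ) (t : ℝ) :
    GB (m + 1) (completeMuntzExponents l (m + 1)) 0 t
      = 1 + (-1) ^ (m + 1) * ((m + 1) * (l + m + 1).choose (m + 1)) * betaPoly l m t := by
  have hA : ((l + 1).ascFactorial (m + 1) : ℝ) = (m + 1) * m ! * (l + m + 1).choose (m + 1) := by
    rw [ascFactorial_eq_factorial_mul_choose, show l + (m + 1) = l + m + 1 by omega, cast_mul,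
      factorial_succ, cast_mul, cast_succ]
  have hnode : ∀ j : Fin (m + 2), (j : ℕ) ≠ 0 →
      completeMuntzExponents l (m + 1) j = ((l : ℝ) + (j : ℕ)) := fun j hj => if_neg hj
  have hprod : ∏ j : Fin (m + 1), (0 - completeMuntzExponents l (m + 1) j.succ)
      = (-1) ^ (m + 1) * (l + 1).ascFactorial (m + 1) := by
    rw [ascFactorial_eq_prod_range, cast_prod, ← Fin.prod_univ_eq_prod_range,
      ← Fin.prod_const (m + 1) (-1 : ℝ), ← prod_mul_distrib]
    refine prod_congr rfl fun j _ => ?_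
    rw [hnode _ (by simp)]
    push_cast [Fin.val_succ]; ring
  have hpoints : (fun i : Fin (m + 1) => completeMuntzExponents l (m + 1) i.succ)
      = fun i : Fin (m + 1) => ((l + 1 : ℕ) : ℝ) + (i : ℕ) := by
    funext i
    rw [hnode _ (by simp)]
    push_cast [Fin.val_succ]; ring
  have hterm : ∀ i ∈ range (m + 1), (-1) ^ (m - i) * (m.choose i : ℝ)
      * (t ^ (((l + 1 : ℕ) : ℝ) + (i : ℕ)) / (((l + 1 : ℕ) : ℝ) + (i : ℕ) - 0))
      = (-1) ^ (m - i) * m.choose i * t ^ (l + 1 + i) / (l + 1 + i : ℕ) := by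
    intro i _
    rw [← cast_add, Real.rpow_natCast, sub_zero]
    ring
  have hC : ((l + m + 1).choose (m + 1) : ℝ) ≠ 0 := cast_ne_zero.2 (choose_pos (by omega)).ne'
  have h0 : completeMuntzExponents l (m + 1) 0 = 0 := if_pos rfl
  rw [GB, if_neg (by simp)]
  simp only [Fin.val_zero, Nat.sub_zero, zero_add, Fin.eta]
  rw [divSum_succ, h0, Real.rpow_zero, hprod, hpoints, divSum_add_natCast, sum_congr rfl hterm,
    prod_Ioi_completeMuntzExponents, ← betaPoly]
  simp only [Fin.val_zero, add_zero, Nat.sub_zero]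
  rw [hA]
  field_simp

theorem hasDerivAt_betaPoly (l m : ℕ) (t : ℝ) :
    HasDerivAt (betaPoly l m) (t ^ l * (t - 1) ^ m) t := by
  have h := HasDerivAt.fun_sum (u := range (m + 1)) fun i _ =>
    ((hasDerivAt_pow (l + 1 + i) t).const_mul ((-1 : ℝ) ^ (m - i) * m.choose i)).div_const
      ((l + 1 + i : ℕ) : ℝ)
  refine h.congr_deriv ?_
  rw [sub_eq_add_neg, add_pow, mul_sum]
  refine sum_congr rfl fun i _ => ?_
  rw [show l + 1 + i - 1 = l + i by omega, pow_add]
  field_simp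

theorem hasDerivAt_one_sub_pow_mul_sum (l m : ℕ) (t : ℝ) :
    HasDerivAt
      (fun x => (1 - x) ^ (m + 1) * ∑ j ∈ range (l + 1), ((m + j).choose m : ℝ) * x ^ j)
      (-((m + 1) * (l + m + 1).choose (m + 1)) * t ^ l * (1 - t) ^ m) t := by
  have hsub : HasDerivAt (fun x : ℝ => (1 - x) ^ (m + 1)) (-(m + 1) * (1 - t) ^ m) t := by
    refine (((hasDerivAt_id' t).const_sub 1).fun_pow (m + 1)).congr_deriv ?_
    push_cast; ring
  induction l with
  | zero =>
    simp only [zero_add, range_one, sum_singleton, add_zero, choose_self, cast_one, pow_zero,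
      mul_one]
    exact hsub
  | succ l ih =>
    have hbump := ((hasDerivAt_pow (l + 1) t).fun_mul hsub).const_mul
      ((l + m + 1).choose m : ℝ)
    have hstep : ((m + 1) * (l + m + 1).choose (m + 1) : ℝ) = (l + 1) * (l + m + 1).choose m := by
      exact_mod_cast by
        rw [mul_comm, choose_succ_right_eq, show l + m + 1 - m = l + 1 by omega, mul_comm]
    have hfun :
        (fun x => (1 - x) ^ (m + 1) * ∑ j ∈ range (l + 1 + 1), ((m + j).choose m : ℝ) * x ^ j)
          = fun x => (1 - x) ^ (m + 1) * ∑ j ∈ range (l + 1), ((m + j).choose m : ℝ) * x ^ j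
          + ((l + m + 1).choose m : ℝ) * (x ^ (l + 1) * (1 - x) ^ (m + 1)) := by
      funext x
      rw [sum_range_succ, show m + (l + 1) = l + m + 1 by omega]
      ring
    rw [hfun]
    refine (ih.add hbump).congr_deriv ?_
    rw [show l + 1 + m + 1 = l + m + 1 + 1 by omega, choose_succ_succ' (l + m + 1) m,
      Nat.add_sub_cancel]
    push_cast
    linear_combination -(t ^ l * (1 - t) ^ (m + 1)) * hstep

theorem one_add_betaPoly_eq (l m : ℕ) (t : ℝ) :
    1 + (-1) ^ (m + 1) * ((m + 1) * (l + m + 1).choose (m + 1)) * betaPoly l m t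
      = (1 - t) ^ (m + 1) * ∑ j ∈ range (l + 1), ((m + j).choose m : ℝ) * t ^ j := by
  set c : ℝ := (m + 1) * (l + m + 1).choose (m + 1) with hc
  set F : ℝ → ℝ := fun x => 1 + (-1) ^ (m + 1) * c * betaPoly l m x
    - (1 - x) ^ (m + 1) * ∑ j ∈ range (l + 1), ((m + j).choose m : ℝ) * x ^ j
  have hF (x : ℝ) : HasDerivAt F 0 x := by
    have hβ := ((hasDerivAt_betaPoly l m x).const_mul ((-1 : ℝ) ^ (m + 1) * c)).const_add 1
    refine (hβ.sub (hasDerivAt_one_sub_pow_mul_sum l m x)).congr_deriv ?_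
    have hsign : (-1 : ℝ) ^ (m + 1) * (x - 1) ^ m = -(1 - x) ^ m := by
      rw [pow_succ, mul_right_comm, ← mul_pow, show -1 * (x - 1) = 1 - x by ring, mul_neg_one]
    rw [← hc]
    linear_combination c * x ^ l * hsign
  have hF0 : F 0 = 0 := by simp [F, betaPoly, sum_range_succ']
  have := is_const_of_deriv_eq_zero (fun x => (hF x).differentiableAt) (fun x => (hF x).deriv) t 0
  rw [hF0] at this
  exact sub_eq_zero.1 this

end

theorem stmt19_general (l n : ℕ) (hn : 1 ≤ n) (t : ℝ) :
    GB n (fun i => if (i : ℕ) = 0 then 0 else (l : ℝ) + (i : ℕ)) 0 t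
        = (1 - t) ^ n * ∑ j ∈ Finset.range (l+1), (((n + j - 1).choose (n-1)) : ℝ) * t ^ j
    ∧ ∀ k : Fin (n+1), 1 ≤ (k : ℕ) →
        GB n (fun i => if (i : ℕ) = 0 then 0 else (l : ℝ) + (i : ℕ)) k t
          = (((n + l).choose ((k : ℕ) + l)) : ℝ) * t ^ (l + (k : ℕ)) * (1 - t) ^ (n - (k : ℕ)) := by
  obtain ⟨m, rfl⟩ : ∃ m, n = m + 1 := ⟨n - 1, by omega⟩
  refine ⟨?_, GB_completeMuntzExponents_of_pos l (m + 1) t⟩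
  rw [show (fun i : Fin (m + 2) => if (i : ℕ) = 0 then 0 else (l : ℝ) + (i : ℕ))
      = completeMuntzExponents l (m + 1) from rfl,
    GB_completeMuntzExponents_zero, one_add_betaPoly_eq]
  simp only [add_tsub_cancel_right, add_right_comm m 1]

/-- Explicit Gelfond-Bernstein basis for the complete Muntz space
span(1, t^(l+1), ..., t^(l+n)) on [0,1]. -/
theorem stmt19 (l n : ℕ) (hn : 1 ≤ n) (t : ℝ) (ht : t ∈ Set.Icc (0:ℝ) 1) :
    GB n (fun i => if (i : ℕ) = 0 then 0 else (l : ℝ) + (i : ℕ)) 0 t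
        = (1 - t) ^ n * ∑ j ∈ Finset.range (l+1), (((n + j - 1).choose (n-1)) : ℝ) * t ^ j
    ∧ ∀ k : Fin (n+1), 1 ≤ (k : ℕ) →
        GB n (fun i => if (i : ℕ) = 0 then 0 else (l : ℝ) + (i : ℕ)) k t
          = (((n + l).choose ((k : ℕ) + l)) : ℝ) * t ^ (l + (k : ℕ)) * (1 - t) ^ (n - (k : ℕ)) :=
  stmt19_general l n hn t
end
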